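/- arXiv:2403.16822 — 12 statements merged into one kernel-verified Lean document; each statement's English description precedes it below -/
import Mathlib

section
/- Let G be a finite group and let L, R be subgroups of G. Then the following are equivalent: (i) there is a constant c such that for all x, y ∈ G with Lx ≠ Ly, the neighbourhoods in the coset graph Cos(G, L, R) satisfy |Γ(Lx) ∩ Γ(Ly)| = c; (ii) there is a constant c such that |RL ∩ RLg| = c · |R| for every g ∈ G \ L, where RL = {xy : x ∈ R, y ∈ L} and RLg = {xyg : x ∈ R, y ∈ L} are subsets of G. -/
private lemma coset_eq {G : Type*} [Group G] (R : Subgroup G) {z z' : G}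
    (h : z' ∈ {w : G | ∃ r' ∈ R, w = r' * z}) :
    {w : G | ∃ r' ∈ R, w = r' * z'} = {w : G | ∃ r' ∈ R, w = r' * z} := by
  obtain ⟨r, hr, rfl⟩ := h
  ext w
  constructor
  · rintro ⟨r', hr', rfl⟩
    exact ⟨r' * r, R.mul_mem hr' hr, (mul_assoc _ _ _).symm⟩
  · rintro ⟨r', hr', rfl⟩
    exact ⟨r' * r⁻¹, R.mul_mem hr' (R.inv_mem hr), by group⟩

private lemma self_mem_coset {G : Type*} [Group G] (R : Subgroup G) (z : G) :
    z ∈ {w : G | ∃ r' ∈ R, w = r' * z} :=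
  ⟨1, R.one_mem, (one_mul z).symm⟩

private lemma key {G : Type*} [Group G] [Fintype G] (R : Subgroup G) (T : Set G)
    (hT : ∀ r ∈ R, ∀ t ∈ T, r * t ∈ T) :
    Nat.card {s : Set G | ∃ z ∈ T, s = {w : G | ∃ r' ∈ R, w = r' * z}} * Nat.card R
      = Nat.card T := by
  classical
  set S := {s : Set G | ∃ z ∈ T, s = {w : G | ∃ r' ∈ R, w = r' * z}} with hS
  let F : T → S := fun z => ⟨{w | ∃ r' ∈ R, w = r' * z.1}, z.1, z.2, rfl⟩
  have hfib : ∀ s : S, Nat.card {z : T // F z = s} = Nat.card R := by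
    rintro ⟨s, hs⟩
    obtain ⟨z₀, hz₀, rfl⟩ := hs
    let e : R → {z : T // F z = ⟨{w : G | ∃ r' ∈ R, w = r' * z₀}, z₀, hz₀, rfl⟩} := fun r =>
      ⟨⟨r.1 * z₀, hT r.1 r.2 z₀ hz₀⟩, Subtype.ext (coset_eq R ⟨r.1, r.2, rfl⟩)⟩
    have hbij : Function.Bijective e := by
      constructor
      · rintro r r' h
        have h2 : (r : G) * z₀ = (r' : G) * z₀ := congrArg (fun x => (x.1 : G)) h
        exact Subtype.ext (mul_right_cancel h2)
      · rintro ⟨⟨z, hzT⟩, hz⟩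
        have hz' : z ∈ {w : G | ∃ r' ∈ R, w = r' * z₀} := by
          have h3 := congrArg Subtype.val hz
          simp only [F] at h3
          rw [← h3]
          exact self_mem_coset R z
        obtain ⟨r, hr, rfl⟩ := hz'
        exact ⟨⟨r, hr⟩, rfl⟩
    exact (Nat.card_eq_of_bijective e hbij).symm
  have hcongr := Nat.card_congr (Equiv.sigmaFiberEquiv F)
  letI : Fintype S := Fintype.ofFinite _
  letI : ∀ s : S, Fintype {z : T // F z = s} := fun s => Fintype.ofFinite _
  have hsig : Nat.card ((s : S) × {z : T // F z = s}) = Nat.card S * Nat.card R := by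
    rw [Nat.card_eq_fintype_card, Fintype.card_sigma]
    calc (∑ s : S, Fintype.card {z : T // F z = s})
        = ∑ _s : S, Nat.card R := by
          refine Finset.sum_congr rfl fun s _ => ?_
          rw [← Nat.card_eq_fintype_card]; exact hfib s
      _ = Fintype.card S * Nat.card R := by
          rw [Finset.sum_const, Finset.card_univ, smul_eq_mul]
      _ = Nat.card S * Nat.card R := by simp [Nat.card_eq_fintype_card]
  rw [← hsig]; exact hcongr

private lemma inter_eq {G : Type*} [Group G] (L R : Subgroup G) (x y : G) :
    ({s : Set G | ∃ z, (∃ r ∈ R, ∃ l ∈ L, z = r * l * x) ∧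
          s = {w : G | ∃ r' ∈ R, w = r' * z}} ∩
        {s : Set G | ∃ z, (∃ r ∈ R, ∃ l ∈ L, z = r * l * y) ∧
          s = {w : G | ∃ r' ∈ R, w = r' * z}})
    = {s : Set G | ∃ z ∈ (({z | ∃ r ∈ R, ∃ l ∈ L, z = r * l * x} ∩
        {z | ∃ r ∈ R, ∃ l ∈ L, z = r * l * y}) : Set G),
        s = {w : G | ∃ r' ∈ R, w = r' * z}} := by
  ext s
  constructor
  · rintro ⟨⟨z, hzx, rfl⟩, ⟨z', hzy, hs'⟩⟩
    refine ⟨z', ⟨?_, hzy⟩, hs'⟩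
    have hz' : z' ∈ {w : G | ∃ r' ∈ R, w = r' * z} := by
      rw [hs']; exact self_mem_coset R z'
    obtain ⟨r, hr, rfl⟩ := hz'
    obtain ⟨r₀, hr₀, l₀, hl₀, rfl⟩ := hzx
    exact ⟨r * r₀, R.mul_mem hr hr₀, l₀, hl₀, by group⟩
  · rintro ⟨z, ⟨hzx, hzy⟩, rfl⟩
    exact ⟨⟨z, hzx, rfl⟩, ⟨z, hzy, rfl⟩⟩

private lemma cardB {G : Type*} [Group G] (L R : Subgroup G) (x y : G) :
    Nat.card (({z | ∃ r ∈ R, ∃ l ∈ L, z = r * l * x} ∩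
        {z | ∃ r ∈ R, ∃ l ∈ L, z = r * l * y} : Set G))
    = Nat.card (({z : G | ∃ r ∈ R, ∃ l ∈ L, z = r * l} ∩
        {z : G | ∃ r ∈ R, ∃ l ∈ L, z = r * l * (y * x⁻¹)} : Set G)) := by
  have himg : ({z | ∃ r ∈ R, ∃ l ∈ L, z = r * l * x} ∩
      {z | ∃ r ∈ R, ∃ l ∈ L, z = r * l * y} : Set G)
      = (fun t => t * x) '' (({z : G | ∃ r ∈ R, ∃ l ∈ L, z = r * l} ∩
        {z : G | ∃ r ∈ R, ∃ l ∈ L, z = r * l * (y * x⁻¹)} : Set G)) := by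
    ext z
    constructor
    · rintro ⟨⟨r, hr, l, hl, rfl⟩, ⟨r', hr', l', hl', h⟩⟩
      refine ⟨r * l, ⟨⟨r, hr, l, hl, rfl⟩, ⟨r', hr', l', hl', ?_⟩⟩, rfl⟩
      have : r * l = r' * l' * y * x⁻¹ := by rw [← h]; group
      rw [this]; group
    · rintro ⟨t, ⟨⟨r, hr, l, hl, rfl⟩, ⟨r', hr', l', hl', h⟩⟩, rfl⟩
      refine ⟨⟨r, hr, l, hl, rfl⟩, ⟨r', hr', l', hl', ?_⟩⟩
      rw [h]; group
  rw [himg, Nat.card_image_of_injective (mul_left_injective x)]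

private lemma combined {G : Type*} [Group G] [Fintype G] (L R : Subgroup G) (x y : G) :
    Nat.card (({s : Set G | ∃ z, (∃ r ∈ R, ∃ l ∈ L, z = r * l * x) ∧
          s = {w : G | ∃ r' ∈ R, w = r' * z}} ∩
        {s : Set G | ∃ z, (∃ r ∈ R, ∃ l ∈ L, z = r * l * y) ∧
          s = {w : G | ∃ r' ∈ R, w = r' * z}} : Set (Set G))) * Nat.card R
    = Nat.card (({z : G | ∃ r ∈ R, ∃ l ∈ L, z = r * l} ∩
        {z : G | ∃ r ∈ R, ∃ l ∈ L, z = r * l * (y * x⁻¹)} : Set G)) := by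
  rw [inter_eq L R x y]
  rw [key R _ ?_, cardB L R x y]
  rintro r hr t ⟨⟨r₀, hr₀, l₀, hl₀, rfl⟩, ⟨r₁, hr₁, l₁, hl₁, h⟩⟩
  constructor
  · exact ⟨r * r₀, R.mul_mem hr hr₀, l₀, hl₀, by group⟩
  · exact ⟨r * r₁, R.mul_mem hr hr₁, l₁, hl₁, by rw [h]; group⟩

/-- For a finite group `G` with subgroups `L`, `R`, the following are
equivalent: (i) there is a constant `c` such that any two distinct vertices `Lx ≠ Ly` of the
coset graph `Cos(G, L, R)` have exactly `c` common neighbours (neighbourhoods being the sets of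
right cosets `{Rz : z ∈ RLx}`); (ii) there is a constant `c` with `|RL ∩ RLg| = c · |R|` for
every `g ∈ G \ L`. -/
theorem stmt_1 {G : Type*} [Group G] [Fintype G] (L R : Subgroup G) :
    (∃ c : ℕ, ∀ x y : G, x * y⁻¹ ∉ L →
        Nat.card ({s : Set G | ∃ z, (∃ r ∈ R, ∃ l ∈ L, z = r * l * x) ∧
              s = {w : G | ∃ r' ∈ R, w = r' * z}} ∩
            {s : Set G | ∃ z, (∃ r ∈ R, ∃ l ∈ L, z = r * l * y) ∧
              s = {w : G | ∃ r' ∈ R, w = r' * z}} : Set (Set G)) = c) ↔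
    (∃ c : ℕ, ∀ g : G, g ∉ L →
        Nat.card ({x : G | ∃ r ∈ R, ∃ l ∈ L, x = r * l} ∩
            {x : G | ∃ r ∈ R, ∃ l ∈ L, x = r * l * g} : Set G) = c * Nat.card R) := by
  constructor
  · rintro ⟨c, h⟩
    refine ⟨c, fun g hg => ?_⟩
    have h1 : (1 : G) * g⁻¹ ∉ L := by simpa using hg
    have h2 := h 1 g h1
    have h3 := combined L R 1 g
    rw [h2] at h3
    simp only [mul_one, inv_one] at h3
    exact h3.symm
  · rintro ⟨c, h⟩
    refine ⟨c, fun x y hxy => ?_⟩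
    have hg : y * x⁻¹ ∉ L := by
      intro hm
      exact hxy (by simpa [mul_inv_rev] using L.inv_mem hm)
    have h3 := combined L R x y
    rw [h (y * x⁻¹) hg] at h3
    exact Nat.eq_of_mul_eq_mul_right Nat.card_pos h3
end

section
/- Let D = (P, B, I) be a 2-design with parameter λ, let G ≤ Aut(D) be flag-transitive, and let (α, β) be a flag. Then for every g ∈ G \ G_α, the subsets G_β G_α = {xy : x ∈ G_β, y ∈ G_α} and G_β G_α g = {xyg : x ∈ G_β, y ∈ G_α} of G satisfy |G_β G_α ∩ G_β G_α g| = λ · |G_β|. -/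
/-- Let `D = (P, B, I)` be a 2-design with parameter `λ = lam`, let
`G ≤ Aut(D)` be flag-transitive, and let `(α, β)` be a flag. Then for every `g ∈ G \ G_α`,
the subsets `G_β G_α` and `G_β G_α g` of `G` satisfy `|G_β G_α ∩ G_β G_α g| = λ · |G_β|`. -/
theorem stmt_2 {P Bl G : Type*} [Fintype P] [Fintype Bl] [Group G] [Finite G]
    [MulAction G P] [MulAction G Bl] [FaithfulSMul G P]
    (I : P → Bl → Prop) (k lam : ℕ) (hk2 : 2 ≤ k) (hlam1 : 1 ≤ lam)
    (hk : ∀ β : Bl, Nat.card {α : P | I α β} = k)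
    (hlam : ∀ α₁ α₂ : P, α₁ ≠ α₂ → Nat.card {β : Bl | I α₁ β ∧ I α₂ β} = lam)
    (hpres : ∀ (g : G) (α : P) (β : Bl), I α β ↔ I (g • α) (g • β))
    (hflag : ∀ (α : P) (β : Bl), I α β → ∀ (α' : P) (β' : Bl), I α' β' →
      ∃ g : G, g • α = α' ∧ g • β = β')
    (α : P) (β : Bl) (hαβ : I α β)
    (g : G) (hg : g ∉ MulAction.stabilizer G α) :
    Nat.card ({x : G | ∃ u ∈ MulAction.stabilizer G β, ∃ v ∈ MulAction.stabilizer G α,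
          x = u * v} ∩
        {x : G | ∃ u ∈ MulAction.stabilizer G β, ∃ v ∈ MulAction.stabilizer G α,
          x = u * v * g} : Set G) =
      lam * Nat.card (MulAction.stabilizer G β) := by
  classical
  set α' : P := g⁻¹ • α with hα'
  have hne : α ≠ α' := by
    intro h
    apply hg
    have : g • α' = α := by rw [hα', smul_inv_smul]
    rw [← h] at this
    exact this
  -- membership characterization of G_β G_α
  have hmem1 : ∀ x : G, (∃ u ∈ MulAction.stabilizer G β, ∃ v ∈ MulAction.stabilizer G α,
      x = u * v) ↔ I (x • α) β := by
    intro x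
    constructor
    · rintro ⟨u, hu, v, hv, rfl⟩
      have : (u * v) • α = u • α := by rw [mul_smul, hv]
      rw [this]
      have := (hpres u α β).mp hαβ
      rwa [hu] at this
    · intro h
      obtain ⟨u, hu1, hu2⟩ := hflag α β hαβ (x • α) β h
      refine ⟨u, hu2, u⁻¹ * x, ?_, by group⟩
      show (u⁻¹ * x) • α = α
      rw [mul_smul, ← hu1, inv_smul_smul]
  have hmem2 : ∀ x : G, (∃ u ∈ MulAction.stabilizer G β, ∃ v ∈ MulAction.stabilizer G α,
      x = u * v * g) ↔ I (x • α') β := by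
    intro x
    constructor
    · rintro ⟨u, hu, v, hv, rfl⟩
      have h1 : (u * v * g) • α' = (u * v) • α := by
        rw [hα', mul_smul, smul_inv_smul]
      rw [h1]
      exact (hmem1 (u * v)).mp ⟨u, hu, v, hv, rfl⟩
    · intro h
      have h1 : (x * g⁻¹) • α = x • α' := by rw [mul_smul]
      obtain ⟨u, hu, v, hv, hx⟩ := (hmem1 (x * g⁻¹)).mpr (by rw [h1]; exact h)
      exact ⟨u, hu, v, hv, by rw [← hx]; group⟩
  -- rewrite the intersection
  have hset : ({x : G | ∃ u ∈ MulAction.stabilizer G β, ∃ v ∈ MulAction.stabilizer G α,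
          x = u * v} ∩
        {x : G | ∃ u ∈ MulAction.stabilizer G β, ∃ v ∈ MulAction.stabilizer G α,
          x = u * v * g} : Set G) =
      {x : G | I α (x⁻¹ • β) ∧ I α' (x⁻¹ • β)} := by
    ext x
    simp only [Set.mem_inter_iff, Set.mem_setOf_eq, hmem1 x, hmem2 x]
    constructor
    · rintro ⟨h1, h2⟩
      constructor
      · have := (hpres x⁻¹ (x • α) β).mp h1
        rwa [inv_smul_smul] at this
      · have := (hpres x⁻¹ (x • α') β).mp h2
        rwa [inv_smul_smul] at this
    · rintro ⟨h1, h2⟩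
      constructor
      · have := (hpres x α (x⁻¹ • β)).mp h1
        rwa [smul_inv_smul] at this
      · have := (hpres x α' (x⁻¹ • β)).mp h2
        rwa [smul_inv_smul] at this
  rw [hset]
  -- choice function: for each block through α, a group element mapping β to it
  have hc : ∀ β' : Bl, I α β' → ∃ u : G, u • β = β' := by
    intro β' h
    obtain ⟨u, _, hu⟩ := hflag α β hαβ α β' h
    exact ⟨u, hu⟩
  choose c hcspec using hc
  -- explicit bijection
  have e : {x : G | I α (x⁻¹ • β) ∧ I α' (x⁻¹ • β)} ≃
      ({β'' : Bl | I α β'' ∧ I α' β''} × MulAction.stabilizer G β) := by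
    refine ⟨fun x => (⟨x.1⁻¹ • β, x.2⟩,
        ⟨(c (x.1⁻¹ • β) x.2.1)⁻¹ * x.1⁻¹, ?_⟩),
      fun p => ⟨p.2.1⁻¹ * (c p.1.1 p.1.2.1)⁻¹, ?_⟩, ?_, ?_⟩
    · show ((c (x.1⁻¹ • β) x.2.1)⁻¹ * x.1⁻¹) • β = β
      rw [mul_smul, inv_smul_eq_iff, hcspec]
    · have hβ : (p.2.1⁻¹ * (c p.1.1 p.1.2.1)⁻¹)⁻¹ • β = p.1.1 := by
        have hs : p.2.1 • β = β := p.2.2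
        rw [mul_inv_rev, inv_inv, inv_inv, mul_smul, hs, hcspec p.1.1 p.1.2.1]
      show I α ((p.2.1⁻¹ * (c p.1.1 p.1.2.1)⁻¹)⁻¹ • β) ∧
        I α' ((p.2.1⁻¹ * (c p.1.1 p.1.2.1)⁻¹)⁻¹ • β)
      rw [hβ]
      exact p.1.2
    · intro x
      apply Subtype.ext
      show ((c (x.1⁻¹ • β) x.2.1)⁻¹ * x.1⁻¹)⁻¹ * (c (x.1⁻¹ • β) x.2.1)⁻¹ = x.1
      group
    · rintro ⟨⟨β'', hβ''⟩, ⟨s, hs⟩⟩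
      have hβ : (s⁻¹ * (c β'' hβ''.1)⁻¹)⁻¹ • β = β'' := by
        rw [mul_inv_rev, inv_inv, inv_inv, mul_smul, hs, hcspec β'' hβ''.1]
      apply Prod.ext
      · apply Subtype.ext
        exact hβ
      · apply Subtype.ext
        show (c ((s⁻¹ * (c β'' hβ''.1)⁻¹)⁻¹ • β) _)⁻¹ * (s⁻¹ * (c β'' hβ''.1)⁻¹)⁻¹ = s
        have : ((s⁻¹ * (c β'' hβ''.1)⁻¹)⁻¹ • β) = β'' := hβ
        simp only [this]
        group
  rw [Nat.card_congr e, Nat.card_prod, hlam α α' hne]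
end

section
/- Let D = (P, B, I) be a non-trivial 2-design admitting a flag-transitive automorphism group G = G₁ × G₂ (an external direct product acting faithfully on P), and let (α, β) be a flag. Assume the stabilizer G_α decomposes as G_α = L₁ × L₂ where L₁ is a proper subgroup of G₁ and L₂ is a proper subgroup of G₂. If K = K₁ × K₂ is a subgroup of the block stabilizer G_β with K₁ ≤ G₁ and K₂ ≤ G₂, then K is not transitive on D(β), the set of points incident with β. -/
/-- Let `D = (P, B, I)` be a non-trivial 2-design admitting a flag-transitive
automorphism group `G = G₁ × G₂` acting faithfully on `P`, and let `(α, β)` be a flag. Assume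
`G_α = L₁ × L₂` with `L₁ < G₁` and `L₂ < G₂` proper. If `K = K₁ × K₂ ≤ G_β` with `K₁ ≤ G₁`
and `K₂ ≤ G₂`, then `K` is not transitive on `D(β)`. -/
theorem stmt_7 {P Bl G₁ G₂ : Type*} [Fintype P] [Fintype Bl] [Group G₁] [Group G₂]
    [Finite G₁] [Finite G₂]
    [MulAction (G₁ × G₂) P] [MulAction (G₁ × G₂) Bl] [FaithfulSMul (G₁ × G₂) P]
    (I : P → Bl → Prop) (k lam : ℕ) (hk2 : 2 ≤ k) (hlam1 : 1 ≤ lam)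
    (hk : ∀ β : Bl, Nat.card {α : P | I α β} = k)
    (hlam : ∀ α₁ α₂ : P, α₁ ≠ α₂ → Nat.card {β : Bl | I α₁ β ∧ I α₂ β} = lam)
    (hnontriv : k < Nat.card P)
    (hpres : ∀ (g : G₁ × G₂) (α : P) (β : Bl), I α β ↔ I (g • α) (g • β))
    (hflag : ∀ (α : P) (β : Bl), I α β → ∀ (α' : P) (β' : Bl), I α' β' →
      ∃ g : G₁ × G₂, g • α = α' ∧ g • β = β')
    (α : P) (β : Bl) (hαβ : I α β)
    (L₁ : Subgroup G₁) (L₂ : Subgroup G₂) (hL₁ : L₁ ≠ ⊤) (hL₂ : L₂ ≠ ⊤)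
    (hstab : MulAction.stabilizer (G₁ × G₂) α = L₁.prod L₂)
    (K₁ : Subgroup G₁) (K₂ : Subgroup G₂)
    (hK : K₁.prod K₂ ≤ MulAction.stabilizer (G₁ × G₂) β) :
    ¬ (∀ α₁ : P, I α₁ β → ∀ α₂ : P, I α₂ β → ∃ x ∈ K₁.prod K₂, x • α₁ = α₂) := by
  intro H
  -- when two translates of α coincide
  have key : ∀ g h : G₁ × G₂, g • α = h • α ↔ (h⁻¹ * g).1 ∈ L₁ ∧ (h⁻¹ * g).2 ∈ L₂ := by
    intro g h
    rw [← Subgroup.mem_prod, ← hstab, MulAction.mem_stabilizer_iff, mul_smul,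
      inv_smul_eq_iff]
  -- K-translates of α lie on β
  have memβ : ∀ x : G₁, x ∈ K₁ → ∀ y : G₂, y ∈ K₂ → I (((x, y) : G₁ × G₂) • α) β := by
    intro x hx y hy
    have hxy : ((x, y) : G₁ × G₂) ∈ K₁.prod K₂ := Subgroup.mem_prod.2 ⟨hx, hy⟩
    have hb : ((x, y) : G₁ × G₂) • β = β := MulAction.mem_stabilizer_iff.1 (hK hxy)
    have := (hpres (x, y) α β).1 hαβ
    rwa [hb] at this
  -- rectangle property for β
  have Rβ : ∀ g h : G₁ × G₂, I (g • α) β → I (h • α) β →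
      I (((g.1, h.2) : G₁ × G₂) • α) β := by
    intro g h hg hh
    obtain ⟨x, hxK, hxα⟩ := H α hαβ (g • α) hg
    obtain ⟨y, hyK, hyα⟩ := H α hαβ (h • α) hh
    rw [Subgroup.mem_prod] at hxK hyK
    obtain ⟨hl1, -⟩ := (key g x).1 hxα.symm
    obtain ⟨-, hl2⟩ := (key h y).1 hyα.symm
    have heq : ((g.1, h.2) : G₁ × G₂) • α = ((x.1, y.2) : G₁ × G₂) • α := by
      rw [key]
      exact ⟨hl1, hl2⟩
    rw [heq]
    exact memβ x.1 hxK.1 y.2 hyK.2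
  -- G is transitive on points
  have trans : ∀ p : P, ∃ g : G₁ × G₂, g • α = p := by
    intro p
    have hnt : Nontrivial P := Finite.one_lt_card_iff_nontrivial.mp (by omega)
    obtain ⟨q, hq⟩ := exists_ne p
    have hcard := hlam p q hq.symm
    have hne : Nonempty {β' : Bl | I p β' ∧ I q β'} := by
      have h0 : Nat.card {β' : Bl | I p β' ∧ I q β'} ≠ 0 := by rw [hcard]; omega
      exact (Nat.card_ne_zero.mp h0).1
    obtain ⟨⟨β', hβ'⟩⟩ := hne
    obtain ⟨g, hg1, -⟩ := hflag α β hαβ p β' hβ'.1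
    exact ⟨g, hg1⟩
  -- rectangle property for all blocks
  have Rall : ∀ β' : Bl, ∀ g h : G₁ × G₂, I (g • α) β' → I (h • α) β' →
      I (((g.1, h.2) : G₁ × G₂) • α) β' := by
    intro β' g h hg hh
    have hne : Nonempty {p : P | I p β'} := by
      have h0 : Nat.card {p : P | I p β'} ≠ 0 := by rw [hk β']; omega
      exact (Nat.card_ne_zero.mp h0).1
    obtain ⟨⟨p₀, hp₀⟩⟩ := hne
    obtain ⟨t, htα, htβ⟩ := hflag α β hαβ p₀ β' hp₀
    have back : ∀ x : P, I x β' ↔ I (t⁻¹ • x) β := by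
      intro x
      constructor
      · intro hx
        have := (hpres t⁻¹ x β').1 hx
        rwa [← htβ, inv_smul_smul] at this
      · intro hx
        have := (hpres t (t⁻¹ • x) β).1 hx
        rwa [smul_inv_smul, htβ] at this
    have h1 := (back _).1 hg
    have h2 := (back _).1 hh
    rw [← mul_smul] at h1 h2
    have h3 := Rβ (t⁻¹ * g) (t⁻¹ * h) h1 h2
    have h4 : I (t • ((((t⁻¹ * g).1, (t⁻¹ * h).2) : G₁ × G₂) • α)) β' :=
      (back _).2 (by rwa [inv_smul_smul])
    have h5 : t • ((((t⁻¹ * g).1, (t⁻¹ * h).2) : G₁ × G₂) • α)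
        = ((g.1, h.2) : G₁ × G₂) • α := by
      rw [← mul_smul]
      congr 1
      obtain ⟨t₁, t₂⟩ := t
      obtain ⟨g₁, g₂⟩ := g
      obtain ⟨h₁, h₂⟩ := h
      simp [Prod.ext_iff]
    rwa [h5] at h4
  -- column filling
  have colfill : ∀ g h : G₁ × G₂, h.2⁻¹ * g.2 ∉ L₂ → ∀ β' : Bl,
      I (g • α) β' → I (((g.1, h.2) : G₁ × G₂) • α) β' → I (h • α) β' := by
    intro g h hcond β' hp hq
    have hpq : g • α ≠ ((g.1, h.2) : G₁ × G₂) • α := by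
      intro he
      exact hcond ((key g (g.1, h.2)).1 he).2
    have hpr : g • α ≠ h • α := fun he => hcond ((key g h).1 he).2
    have hsub : {b : Bl | I (g • α) b ∧ I (h • α) b}
        ⊆ {b : Bl | I (g • α) b ∧ I (((g.1, h.2) : G₁ × G₂) • α) b} := by
      rintro b ⟨h1, h2⟩
      exact ⟨h1, Rall b g h h1 h2⟩
    have hA := hlam _ _ hpr
    have hB := hlam _ _ hpq
    have heq : {b : Bl | I (g • α) b ∧ I (h • α) b}
        = {b : Bl | I (g • α) b ∧ I (((g.1, h.2) : G₁ × G₂) • α) b} :=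
      Set.eq_of_subset_of_ncard_le hsub
        (by rw [← Nat.card_coe_set_eq, ← Nat.card_coe_set_eq, hA, hB])
        (Set.toFinite _)
    have hmem : β' ∈ {b : Bl | I (g • α) b ∧ I (((g.1, h.2) : G₁ × G₂) • α) b} := ⟨hp, hq⟩
    rw [← heq] at hmem
    exact hmem.2
  -- row filling
  have rowfill : ∀ g h : G₁ × G₂, h.1⁻¹ * g.1 ∉ L₁ → ∀ β' : Bl,
      I (g • α) β' → I (((h.1, g.2) : G₁ × G₂) • α) β' → I (h • α) β' := by
    intro g h hcond β' hp hq
    have hpq : g • α ≠ ((h.1, g.2) : G₁ × G₂) • α := by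
      intro he
      exact hcond ((key g (h.1, g.2)).1 he).1
    have hpr : g • α ≠ h • α := fun he => hcond ((key g h).1 he).1
    have hsub : {b : Bl | I (g • α) b ∧ I (h • α) b}
        ⊆ {b : Bl | I (g • α) b ∧ I (((h.1, g.2) : G₁ × G₂) • α) b} := by
      rintro b ⟨h1, h2⟩
      exact ⟨h1, Rall b h g h2 h1⟩
    have hA := hlam _ _ hpr
    have hB := hlam _ _ hpq
    have heq : {b : Bl | I (g • α) b ∧ I (h • α) b}
        = {b : Bl | I (g • α) b ∧ I (((h.1, g.2) : G₁ × G₂) • α) b} :=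
      Set.eq_of_subset_of_ncard_le hsub
        (by rw [← Nat.card_coe_set_eq, ← Nat.card_coe_set_eq, hA, hB])
        (Set.toFinite _)
    have hmem : β' ∈ {b : Bl | I (g • α) b ∧ I (((h.1, g.2) : G₁ × G₂) • α) b} := ⟨hp, hq⟩
    rw [← heq] at hmem
    exact hmem.2
  -- proper subgroups give outside elements
  obtain ⟨e₁, he₁⟩ : ∃ x : G₁, x ∉ L₁ := by
    by_contra hc
    push_neg at hc
    exact hL₁ ((Subgroup.eq_top_iff' L₁).mpr hc)
  obtain ⟨e₂, he₂⟩ : ∃ x : G₂, x ∉ L₂ := by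
    by_contra hc
    push_neg at hc
    exact hL₂ ((Subgroup.eq_top_iff' L₂).mpr hc)
  -- a second point of β
  have hnt : Nontrivial {p : P | I p β} := by
    apply Finite.one_lt_card_iff_nontrivial.mp
    rw [hk β]; omega
  obtain ⟨q₀s, hq₀ne⟩ := exists_ne (⟨α, hαβ⟩ : {p : P | I p β})
  obtain ⟨m, hm⟩ := trans q₀s.1
  have hmβ : I (m • α) β := by rw [hm]; exact q₀s.2
  have hmα : m • α ≠ α := by
    rw [hm]
    intro he
    exact hq₀ne (Subtype.ext he)
  have hα1 : I (((1 : G₁ × G₂)) • α) β := by rwa [one_smul]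
  have hmnot : m.1 ∉ L₁ ∨ m.2 ∉ L₂ := by
    by_contra hc
    push_neg at hc
    apply hmα
    have : m • α = (1 : G₁ × G₂) • α := (key m 1).2 (by simpa using hc)
    rwa [one_smul] at this
  -- fill the whole block
  have hall : ∀ g : G₁ × G₂, I (g • α) β := by
    rcases hmnot with hm1 | hm2
    · -- m.1 ∉ L₁
      have s1 : I (((m.1, (1 : G₂)) : G₁ × G₂) • α) β := Rall β m 1 hmβ hα1
      have s2 : ∀ b : G₂, I (((m.1, b) : G₁ × G₂) • α) β := by
        intro b
        exact rowfill 1 (m.1, b) (by simpa using hm1) β hα1 s1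
      have s3 : ∀ b : G₂, I ((((1 : G₁), b) : G₁ × G₂) • α) β := fun b =>
        Rall β 1 (m.1, b) hα1 (s2 b)
      have s5 : ∀ a : G₁, I (((a, e₂) : G₁ × G₂) • α) β := by
        intro a
        exact colfill 1 (a, e₂) (by simpa using he₂) β hα1 (s3 e₂)
      rintro ⟨a, b⟩
      exact Rall β (a, e₂) (m.1, b) (s5 a) (s2 b)
    · -- m.2 ∉ L₂
      have s1 : I ((((1 : G₁), m.2) : G₁ × G₂) • α) β := Rall β 1 m hα1 hmβ
      have s2 : ∀ a : G₁, I (((a, m.2) : G₁ × G₂) • α) β := by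
        intro a
        exact colfill 1 (a, m.2) (by simpa using hm2) β hα1 s1
      have s3 : ∀ a : G₁, I (((a, (1 : G₂)) : G₁ × G₂) • α) β := fun a =>
        Rall β (a, m.2) 1 (s2 a) hα1
      have s5 : ∀ b : G₂, I (((e₁, b) : G₁ × G₂) • α) β := by
        intro b
        exact rowfill 1 (e₁, b) (by simpa using he₁) β hα1 (s3 e₁)
      rintro ⟨a, b⟩
      exact Rall β (a, m.2) (e₁, b) (s2 a) (s5 b)
  -- contradiction with k < v
  have huniv : {p : P | I p β} = Set.univ := Set.eq_univ_of_forall (fun p => by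
    obtain ⟨g, hg⟩ := trans p
    rw [← hg]
    exact hall g)
  have hcard : Nat.card {p : P | I p β} = Nat.card P := by
    rw [Nat.card_coe_set_eq, huniv, Set.ncard_univ]
  rw [hk β] at hcard
  omega
end

section
/- Let D = (P, B, I) be a 2-design and G ≤ Aut(D). If G_α acts primitively on D(α) for every point α and G_β acts primitively on D(β) for every block β (i.e., D is G-locally primitive), then G is transitive on the set of flags of D. -/
open Pointwise

/-- A subgroup `H ≤ G` acts primitively on an (invariant) subset `S` of `X`: `H` leaves `S`
invariant, acts transitively on `S`, and every `H`-invariant block `Δ ⊆ S` (i.e. each `h ∈ H`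
maps `Δ` to itself or to a set disjoint from it) is a singleton/empty or all of `S`. -/
def IsPrimitiveOn {G X : Type*} [Group G] [MulAction G X] (H : Subgroup G) (S : Set X) : Prop :=
  (∀ h ∈ H, ∀ x ∈ S, h • x ∈ S) ∧
  (∀ x ∈ S, ∀ y ∈ S, ∃ h ∈ H, h • x = y) ∧
  (∀ Δ : Set X, Δ ⊆ S → (∀ h ∈ H, h • Δ = Δ ∨ Disjoint (h • Δ) Δ) →
    Δ.Subsingleton ∨ Δ = S)

/-- A design `(P, B, I)` is `G`-locally primitive: for every point `α` the stabilizer `G_α`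
acts primitively on the set `D(α)` of blocks incident with `α`, and for every block `β` the
stabilizer `G_β` acts primitively on the set `D(β)` of points incident with `β`. -/
def LocallyPrimitive (G : Type*) {P B : Type*} [Group G] [MulAction G P] [MulAction G B]
    (I : P → B → Prop) : Prop :=
  (∀ α : P, IsPrimitiveOn (MulAction.stabilizer G α) {β : B | I α β}) ∧
  (∀ β : B, IsPrimitiveOn (MulAction.stabilizer G β) {α : P | I α β})

/-- If a 2-design `D = (P, B, I)` is `G`-locally primitive, then `G` is
transitive on the set of flags of `D`. -/
theorem stmt_8 {P Bl G : Type*} [Fintype P] [Fintype Bl] [Group G]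
    [MulAction G P] [MulAction G Bl] [FaithfulSMul G P]
    (I : P → Bl → Prop) (k lam : ℕ) (hk2 : 2 ≤ k) (hlam1 : 1 ≤ lam)
    (hk : ∀ β : Bl, Nat.card {α : P | I α β} = k)
    (hlam : ∀ α₁ α₂ : P, α₁ ≠ α₂ → Nat.card {β : Bl | I α₁ β ∧ I α₂ β} = lam)
    (hpres : ∀ (g : G) (α : P) (β : Bl), I α β ↔ I (g • α) (g • β))
    (hlp : LocallyPrimitive G I) :
    ∀ (α : P) (β : Bl), I α β → ∀ (α' : P) (β' : Bl), I α' β' →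
      ∃ g : G, g • α = α' ∧ g • β = β' := by
  intro α β hαβ α' β' hα'β'
  obtain ⟨hP, hB⟩ := hlp
  by_cases hαα : α = α'
  · subst hαα
    obtain ⟨g, hg, hgβ⟩ := (hP α).2.1 β hαβ β' hα'β'
    exact ⟨g, hg, hgβ⟩
  · -- find a common block γ of α and α'
    have hne : ({γ : Bl | I α γ ∧ I α' γ}).Nonempty := by
      by_contra h
      rw [Set.not_nonempty_iff_eq_empty] at h
      have := hlam α α' hαα
      rw [h] at this
      simp at this
      omega
    obtain ⟨γ, hγα, hγα'⟩ := hne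
    -- g₁ ∈ G_α : β ↦ γ
    obtain ⟨g₁, hg₁, hg₁β⟩ := (hP α).2.1 β hαβ γ hγα
    -- g₂ ∈ G_γ : α ↦ α'
    obtain ⟨g₂, hg₂, hg₂α⟩ := (hB γ).2.1 α hγα α' hγα'
    -- g₃ ∈ G_{α'} : γ ↦ β'
    obtain ⟨g₃, hg₃, hg₃γ⟩ := (hP α').2.1 γ hγα' β' hα'β'
    refine ⟨g₃ * g₂ * g₁, ?_, ?_⟩
    · rw [mul_smul, mul_smul, hg₁, hg₂α, hg₃]
    · rw [mul_smul, mul_smul, hg₁β, hg₂, hg₃γ]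
end

section
/- Let D = (P, B, I) be a 2-design and G ≤ Aut(D). If D is G-locally primitive, then G acts primitively on the point set P: G is transitive on P and every G-invariant partition of P is trivial (equivalently, every block of the G-action on P is a singleton or all of P). -/
open Pointwise

/-- If a 2-design `D = (P, B, I)` is `G`-locally primitive, then `G` acts
primitively on the point set `P`: it is transitive on `P` and every `G`-invariant block of
`P` is a singleton (or empty) or all of `P`. -/
theorem stmt_9 {P Bl G : Type*} [Fintype P] [Fintype Bl] [Group G]
    [MulAction G P] [MulAction G Bl] [FaithfulSMul G P]
    (I : P → Bl → Prop) (k lam : ℕ) (hk2 : 2 ≤ k) (hlam1 : 1 ≤ lam)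
    (hk : ∀ β : Bl, Nat.card {α : P | I α β} = k)
    (hlam : ∀ α₁ α₂ : P, α₁ ≠ α₂ → Nat.card {β : Bl | I α₁ β ∧ I α₂ β} = lam)
    (hpres : ∀ (g : G) (α : P) (β : Bl), I α β ↔ I (g • α) (g • β))
    (hlp : LocallyPrimitive G I) :
    (∀ α₁ α₂ : P, ∃ g : G, g • α₁ = α₂) ∧
    (∀ Δ : Set P, (∀ g : G, g • Δ = Δ ∨ Disjoint (g • Δ) Δ) →
      Δ.Subsingleton ∨ Δ = Set.univ) := by
  classical
  -- any two distinct points lie on a common block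
  have hexists : ∀ a b : P, a ≠ b → ∃ β : Bl, I a β ∧ I b β := by
    intro a b hab
    have hcard := hlam a b hab
    by_contra hcon
    push_neg at hcon
    have hemp : {β : Bl | I a β ∧ I b β} = ∅ := by
      ext β
      simp only [Set.mem_setOf_eq, Set.mem_empty_iff_false, iff_false, not_and]
      exact hcon β
    rw [hemp] at hcard
    simp at hcard
    omega
  -- the action on D(β) sets
  have hsmulD : ∀ (h : G) (β : Bl), h • {α : P | I α β} = {α : P | I α (h • β)} := by
    intro h β
    ext a
    rw [Set.mem_smul_set_iff_inv_smul_mem]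
    simp only [Set.mem_setOf_eq]
    constructor
    · intro hi
      have := (hpres h (h⁻¹ • a) β).mp hi
      simpa using this
    · intro hi
      have := (hpres h⁻¹ a (h • β)).mp hi
      simpa using this
  have htrans : ∀ α₁ α₂ : P, ∃ g : G, g • α₁ = α₂ := by
    intro α₁ α₂
    rcases eq_or_ne α₁ α₂ with h | h
    · exact ⟨1, by simp [h]⟩
    · obtain ⟨β, h1, h2⟩ := hexists α₁ α₂ h
      obtain ⟨-, htr, -⟩ := hlp.2 β
      obtain ⟨g, _, hg2⟩ := htr α₁ h1 α₂ h2
      exact ⟨g, hg2⟩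
  refine ⟨htrans, ?_⟩
  intro Δ hΔ
  by_cases hsub : Δ.Subsingleton
  · exact Or.inl hsub
  right
  obtain ⟨α₁, hα₁, α₂, hα₂, hne12⟩ := Set.not_subsingleton_iff.mp hsub
  -- if some h maps a point of Δ into Δ, then h fixes Δ
  have hfix : ∀ (h : G) (a : P), a ∈ Δ → h • a ∈ Δ → h • Δ = Δ := by
    intro h a ha hha
    rcases hΔ h with he | hd
    · exact he
    · exact absurd hha (Set.disjoint_left.mp hd (Set.smul_mem_smul_set ha))
  -- any block through two distinct points of Δ has all its points in Δ
  have lemA : ∀ β : Bl, ∀ a ∈ Δ, ∀ b ∈ Δ, a ≠ b → I a β → I b β →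
      {α : P | I α β} ⊆ Δ := by
    intro β a ha b hb hab hia hib
    obtain ⟨-, -, hprim⟩ := hlp.2 β
    have hblock : ∀ h ∈ MulAction.stabilizer G β,
        h • (Δ ∩ {α : P | I α β}) = Δ ∩ {α : P | I α β} ∨
        Disjoint (h • (Δ ∩ {α : P | I α β})) (Δ ∩ {α : P | I α β}) := by
      intro h hh
      have hD : h • {α : P | I α β} = {α : P | I α β} := by
        rw [hsmulD, MulAction.mem_stabilizer_iff.mp hh]
      rw [Set.smul_set_inter, hD]
      rcases hΔ h with he | hd
      · left; rw [he]
      · right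
        exact hd.mono Set.inter_subset_left Set.inter_subset_left
    rcases hprim (Δ ∩ {α : P | I α β}) Set.inter_subset_right hblock with hs | he
    · exact absurd (hs ⟨ha, hia⟩ ⟨hb, hib⟩) hab
    · intro x hx
      rw [← he] at hx
      exact hx.1
  -- show Δ = univ
  ext γ
  simp only [Set.mem_univ, iff_true]
  rcases eq_or_ne γ α₁ with rfl | hγ
  · exact hα₁
  obtain ⟨β₀, h01, h02⟩ := hexists α₁ α₂ hne12
  have hβ₀sub : {α : P | I α β₀} ⊆ Δ := lemA β₀ α₁ hα₁ α₂ hα₂ hne12 h01 h02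
  obtain ⟨β₁, h11, h12⟩ := hexists α₁ γ (Ne.symm hγ)
  obtain ⟨-, htr1, -⟩ := hlp.1 α₁
  obtain ⟨h, hh, hhb⟩ := htr1 β₀ h01 β₁ h11
  have hΔeq : h • Δ = Δ :=
    hfix h α₁ hα₁ (by rw [MulAction.mem_stabilizer_iff.mp hh]; exact hα₁)
  have hsubΔ : {α : P | I α β₁} ⊆ Δ := by
    rw [← hhb, ← hsmulD, ← hΔeq]
    exact Set.smul_set_mono hβ₀sub
  exact hsubΔ h12
end

section
/- Let D = (P, B, I) be a G-locally primitive 2-design, and let Δ ⊆ B be a block of imprimitivity for the action of G on B (i.e., for every g ∈ G either Δ^g = Δ or Δ^g ∩ Δ = ∅) with 1 ≤ |Δ| < |B|. Then for every flag (α, β) with β ∈ Δ, the stabilizers satisfy G_α ∩ G_β = G_α ∩ G_Δ, where G_Δ = {g ∈ G : Δ^g = Δ} is the setwise stabilizer of Δ. -/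
open Pointwise

/-- Let `D = (P, B, I)` be a `G`-locally primitive 2-design and let
`Δ ⊆ B` be a block of imprimitivity for `G` acting on `B`, with `1 ≤ |Δ| < |B|`. Then for
every flag `(α, β)` with `β ∈ Δ` we have `G_α ∩ G_β = G_α ∩ G_Δ`, where `G_Δ` is the setwise
stabilizer of `Δ`. -/
theorem stmt_10 {P Bl G : Type*} [Fintype P] [Fintype Bl] [Group G]
    [MulAction G P] [MulAction G Bl] [FaithfulSMul G P]
    (I : P → Bl → Prop) (k lam : ℕ) (hk2 : 2 ≤ k) (hlam1 : 1 ≤ lam)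
    (hk : ∀ β : Bl, Nat.card {α : P | I α β} = k)
    (hlam : ∀ α₁ α₂ : P, α₁ ≠ α₂ → Nat.card {β : Bl | I α₁ β ∧ I α₂ β} = lam)
    (hpres : ∀ (g : G) (α : P) (β : Bl), I α β ↔ I (g • α) (g • β))
    (hlp : LocallyPrimitive G I)
    (Δ : Set Bl) (hΔblock : ∀ g : G, g • Δ = Δ ∨ Disjoint (g • Δ) Δ)
    (hΔ1 : 1 ≤ Nat.card Δ) (hΔ2 : Nat.card Δ < Nat.card Bl)
    (α : P) (β : Bl) (hαβ : I α β) (hβΔ : β ∈ Δ) :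
    MulAction.stabilizer G α ⊓ MulAction.stabilizer G β =
      MulAction.stabilizer G α ⊓ MulAction.stabilizer G Δ := by

  classical
  -- D(α) is invariant under the stabilizer of α
  have hDα : ∀ h : G, h ∈ MulAction.stabilizer G α → h • {β' : Bl | I α β'} = {β' : Bl | I α β'} := by
    intro h hh
    have hhα : h • α = α := MulAction.mem_stabilizer_iff.mp hh
    ext x
    simp only [Set.mem_smul_set_iff_inv_smul_mem, Set.mem_setOf_eq]
    constructor
    · intro hx
      have := (hpres h α (h⁻¹ • x)).mp hx
      rwa [hhα, smul_inv_smul] at this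
    · intro hx
      have := (hpres h⁻¹ α x).mp hx
      rwa [inv_smul_eq_iff.mpr hhα.symm] at this
  -- the key contradiction: D(α) cannot be contained in Δ
  have hcontra : ¬ ({β' : Bl | I α β'} ⊆ Δ) := by
    intro hsub
    -- find a block not in Δ
    have hΔne : Δ ≠ Set.univ := by
      intro h
      rw [h, Nat.card_eq_fintype_card, Nat.card_eq_fintype_card,
        Fintype.card_congr (Equiv.Set.univ Bl)] at hΔ2
      exact lt_irrefl _ hΔ2
    obtain ⟨γ, hγ⟩ := Set.ne_univ_iff_exists_notMem Δ |>.mp hΔne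
    -- find a point α' ≠ α on γ
    have h2 : 1 < ({α' : P | I α' γ}).ncard := by
      rw [← Nat.card_coe_set_eq, hk γ]; omega
    obtain ⟨a, b, ha, hb, hab⟩ := Set.one_lt_ncard_iff (Set.toFinite _) |>.mp h2
    have hex : ∃ α' : P, I α' γ ∧ α' ≠ α := by
      by_cases hA : a = α
      · exact ⟨b, hb, by rw [← hA]; exact fun hh => hab hh.symm⟩
      · exact ⟨a, ha, hA⟩
    obtain ⟨α', hα'γ, hα'ne⟩ := hex
    -- common block β' of α and α'
    have hpos : 0 < Nat.card {β' : Bl | I α β' ∧ I α' β'} := by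
      rw [hlam α α' (fun h => hα'ne h.symm)]; omega
    obtain ⟨⟨β', hβ'⟩⟩ := (Nat.card_pos_iff.mp hpos).1
    have hαβ' : I α β' := hβ'.1
    have hα'β' : I α' β' := hβ'.2
    have hβ'Δ : β' ∈ Δ := hsub hαβ'
    -- transitivity of the stabilizer of β' on D(β')
    obtain ⟨h, hh, hhα⟩ := (hlp.2 β').2.1 α hαβ' α' hα'β'
    have hhβ' : h • β' = β' := MulAction.mem_stabilizer_iff.mp hh
    have hhΔ : h • Δ = Δ := by
      rcases hΔblock h with h1 | h1
      · exact h1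
      · exact absurd rfl (h1.ne_of_mem ⟨β', hβ'Δ, hhβ'⟩ hβ'Δ)
    -- then γ ∈ Δ, contradiction
    have hinv : I α (h⁻¹ • γ) := by
      have := (hpres h⁻¹ α' γ).mp hα'γ
      rwa [← hhα, inv_smul_smul] at this
    have : γ ∈ Δ := by
      rw [← hhΔ]
      exact ⟨h⁻¹ • γ, hsub hinv, smul_inv_smul h γ⟩
    exact hγ this
  apply le_antisymm
  · rintro g ⟨hgα, hgβ⟩
    refine ⟨hgα, ?_⟩
    have hgβ' : g • β = β := MulAction.mem_stabilizer_iff.mp hgβ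
    rcases hΔblock g with h1 | h1
    · exact h1
    · exact absurd rfl (h1.ne_of_mem ⟨β, hβΔ, hgβ'⟩ hβΔ)
  · rintro g ⟨hgα, hgΔ⟩
    refine ⟨hgα, ?_⟩
    have hgα' : g • α = α := MulAction.mem_stabilizer_iff.mp hgα
    have hgΔ' : g • Δ = Δ := MulAction.mem_stabilizer_iff.mp hgΔ
    -- Δ' := Δ ∩ D(α) is a block for G_α on D(α)
    set Δ' : Set Bl := Δ ∩ {β' : Bl | I α β'} with hΔ'def
    have hblock : ∀ h ∈ MulAction.stabilizer G α, h • Δ' = Δ' ∨ Disjoint (h • Δ') Δ' := by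
      intro h hh
      have heq : h • Δ' = (h • Δ) ∩ {β' : Bl | I α β'} := by
        rw [hΔ'def, Set.smul_set_inter, hDα h hh]
      rcases hΔblock h with h1 | h1
      · left; rw [heq, h1]
      · right
        rw [heq]
        exact (h1.mono Set.inter_subset_left Set.inter_subset_left)
    rcases (hlp.1 α).2.2 Δ' Set.inter_subset_right hblock with hsub | hall
    · -- Δ' is a subsingleton containing β and g•β
      have hβmem : β ∈ Δ' := ⟨hβΔ, hαβ⟩
      have hgβmem : g • β ∈ Δ' := by
        constructor
        · rw [← hgΔ']; exact ⟨β, hβΔ, rfl⟩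
        · have := (hpres g α β).mp hαβ
          rwa [hgα'] at this
      exact MulAction.mem_stabilizer_iff.mpr (hsub hgβmem hβmem)
    · exact absurd (fun x hx => (hall ▸ hx : x ∈ Δ').1) hcontra
end

section
/- Let D = (P, B, I) be a G-locally primitive 2-design, and let Δ ⊆ B be a block of imprimitivity for the action of G on B (i.e., for every g ∈ G either Δ^g = Δ or Δ^g ∩ Δ = ∅) with 1 ≤ |Δ| < |B|. Then any two distinct blocks β₁, β₂ ∈ Δ are disjoint: D(β₁) ∩ D(β₂) = ∅. -/
open Pointwise

/-- Let `D = (P, B, I)` be a `G`-locally primitive 2-design and let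
`Δ ⊆ B` be a block of imprimitivity for `G` acting on `B`, with `1 ≤ |Δ| < |B|`. Then any two
distinct blocks `β₁, β₂ ∈ Δ` are disjoint: `D(β₁) ∩ D(β₂) = ∅`. -/
theorem stmt_11 {P Bl G : Type*} [Fintype P] [Fintype Bl] [Group G]
    [MulAction G P] [MulAction G Bl] [FaithfulSMul G P]
    (I : P → Bl → Prop) (k lam : ℕ) (hk2 : 2 ≤ k) (hlam1 : 1 ≤ lam)
    (hk : ∀ β : Bl, Nat.card {α : P | I α β} = k)
    (hlam : ∀ α₁ α₂ : P, α₁ ≠ α₂ → Nat.card {β : Bl | I α₁ β ∧ I α₂ β} = lam)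
    (hpres : ∀ (g : G) (α : P) (β : Bl), I α β ↔ I (g • α) (g • β))
    (hlp : LocallyPrimitive G I)
    (Δ : Set Bl) (hΔblock : ∀ g : G, g • Δ = Δ ∨ Disjoint (g • Δ) Δ)
    (hΔ1 : 1 ≤ Nat.card Δ) (hΔ2 : Nat.card Δ < Nat.card Bl) :
    ∀ β₁ ∈ Δ, ∀ β₂ ∈ Δ, β₁ ≠ β₂ →
      {α : P | I α β₁} ∩ {α : P | I α β₂} = ∅ := by
  intro β₁ hβ₁ β₂ hβ₂ hne
  by_contra hcon
  obtain ⟨α, hα1, hα2⟩ := Set.nonempty_iff_ne_empty.2 hcon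
  simp only [Set.mem_setOf_eq] at hα1 hα2
  -- key: g • D(x) = D(g • x)
  have key : ∀ (g : G) (x : P), g • {β : Bl | I x β} = {β : Bl | I (g • x) β} := by
    intro g x
    ext γ
    rw [Set.mem_smul_set_iff_inv_smul_mem, Set.mem_setOf_eq, Set.mem_setOf_eq,
      hpres g x (g⁻¹ • γ), smul_inv_smul]
  -- Step 1: D(α) ⊆ Δ
  have hDα : {β : Bl | I α β} ⊆ Δ := by
    have hblk : ∀ h ∈ MulAction.stabilizer G α,
        h • (Δ ∩ {β : Bl | I α β}) = Δ ∩ {β : Bl | I α β} ∨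
        Disjoint (h • (Δ ∩ {β : Bl | I α β})) (Δ ∩ {β : Bl | I α β}) := by
      intro h hh
      have hα : h • α = α := hh
      have hInt : h • (Δ ∩ {β : Bl | I α β}) = (h • Δ) ∩ {β : Bl | I α β} := by
        rw [Set.smul_set_inter, key h α, hα]
      rcases hΔblock h with e | d
      · left; rw [hInt, e]
      · right; rw [hInt]
        exact Disjoint.mono Set.inter_subset_left Set.inter_subset_left d
    rcases (hlp.1 α).2.2 (Δ ∩ {β : Bl | I α β}) Set.inter_subset_right hblk with hs | he
    · exact absurd (hs ⟨hβ₁, hα1⟩ ⟨hβ₂, hα2⟩) hne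
    · intro γ hγ
      have hm : γ ∈ Δ ∩ {β : Bl | I α β} := by rw [he]; exact hγ
      exact hm.1
  -- Step 2: propagation along a block of Δ
  have lemB : ∀ β ∈ Δ, ∀ x : P, I x β → {γ : Bl | I x γ} ⊆ Δ →
      ∀ y : P, I y β → {γ : Bl | I y γ} ⊆ Δ := by
    intro β hβ x hx hxS y hy
    obtain ⟨h, hh, hxy⟩ := (hlp.2 β).2.1 x hx y hy
    have hβfix : h • β = β := hh
    have hΔfix : h • Δ = Δ := by
      rcases hΔblock h with e | d
      · exact e
      · exact absurd (d.ne_of_mem ⟨β, hβ, hβfix⟩ hβ) (fun hne' => hne' rfl)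
    have hy' : {γ : Bl | I y γ} = h • {γ : Bl | I x γ} := by
      rw [key h x, hxy]
    rw [hy', ← hΔfix]
    exact Set.smul_set_mono hxS
  -- Step 3: every point has all its blocks in Δ
  have hS : ∀ x : P, {γ : Bl | I x γ} ⊆ Δ := by
    intro x
    by_cases hx : x = α
    · subst hx; exact hDα
    · have hpos : 0 < Nat.card {β : Bl | I α β ∧ I x β} := by
        rw [hlam α x (fun e => hx e.symm)]; omega
      obtain ⟨⟨δ, hδα, hδx⟩⟩ := (Nat.card_pos_iff.mp hpos).1
      exact lemB δ (hDα hδα) α hδα hDα x hδx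
  -- Step 4: Δ = univ, contradiction
  have huniv : Δ = Set.univ := by
    ext γ
    simp only [Set.mem_univ, iff_true]
    have hpos : 0 < Nat.card {x : P | I x γ} := by rw [hk γ]; omega
    obtain ⟨⟨x, hx⟩⟩ := (Nat.card_pos_iff.mp hpos).1
    exact hS x hx
  rw [huniv] at hΔ2
  rw [Nat.card_congr (Equiv.Set.univ Bl)] at hΔ2
  exact lt_irrefl _ hΔ2
end

section
/- Let D = (P, B, I) be a non-trivial G-locally primitive 2-design, and suppose N is a normal subgroup of G that is transitive on the point set P but not transitive on the block set B. Then every N-orbit on B has cardinality b/r (= v/k), where v = |P|, b = |B|, r is the number of blocks incident with a given point, and k is the number of points incident with a given block. -/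
open Pointwise

section Aux

variable {G Bl : Type*} [Group G] [MulAction G Bl]

/-- The `N`-orbit of `x`, written as a set. -/
def orbAux (N : Subgroup G) (x : Bl) : Set Bl := {y | ∃ n ∈ N, y = n • x}

lemma mem_orbAux_self (N : Subgroup G) (x : Bl) : x ∈ orbAux N x :=
  ⟨1, N.one_mem, (one_smul G x).symm⟩

lemma orbAux_eq_of_mem {N : Subgroup G} {x y : Bl} (h : y ∈ orbAux N x) :
    orbAux N y = orbAux N x := by
  obtain ⟨n, hn, rfl⟩ := h
  ext z
  constructor
  · rintro ⟨m, hm, rfl⟩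
    exact ⟨m * n, mul_mem hm hn, (mul_smul m n x).symm⟩
  · rintro ⟨m, hm, rfl⟩
    exact ⟨m * n⁻¹, mul_mem hm (inv_mem hn), by rw [mul_smul, inv_smul_smul]⟩

lemma smul_orbAux {N : Subgroup G} (hN : N.Normal) (g : G) (x : Bl) :
    g • orbAux N x = orbAux N (g • x) := by
  ext z
  constructor
  · rintro ⟨w, ⟨n, hn, rfl⟩, rfl⟩
    exact ⟨g * n * g⁻¹, hN.conj_mem n hn g, by simp [smul_smul, mul_assoc]⟩
  · rintro ⟨n, hn, rfl⟩
    refine ⟨(g⁻¹ * n * g) • x, ⟨g⁻¹ * n * g, ?_, rfl⟩, by simp [smul_smul, mul_assoc]⟩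
    simpa using hN.conj_mem n hn g⁻¹

lemma orbAux_eq_or_disjoint (N : Subgroup G) (x y : Bl) :
    orbAux N x = orbAux N y ∨ Disjoint (orbAux N x) (orbAux N y) := by
  by_cases h : (orbAux N x ∩ orbAux N y).Nonempty
  · obtain ⟨z, hzx, hzy⟩ := h
    left
    rw [← orbAux_eq_of_mem hzx, orbAux_eq_of_mem hzy]
  · right
    exact Set.disjoint_iff_inter_eq_empty.mpr (Set.not_nonempty_iff_eq_empty.mp h)

end Aux

/-- Double counting incidences between two finite types. -/
lemma double_count {P B : Type*} [Fintype P] [Fintype B] (C : P → B → Prop) :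
    ∑ α : P, Nat.card {b : B // C α b} = ∑ b : B, Nat.card {α : P // C α b} := by
  classical
  have e1 : {p : P × B // C p.1 p.2} ≃ Σ α : P, {b : B // C α b} :=
    Equiv.subtypeProdEquivSigmaSubtype C
  have e2 : {p : P × B // C p.1 p.2} ≃ Σ b : B, {α : P // C α b} :=
    ((Equiv.prodComm P B).subtypeEquiv (fun p => Iff.rfl)).trans
      (Equiv.subtypeProdEquivSigmaSubtype fun (b : B) (a : P) => C a b)
  have h1 := Nat.card_congr e1
  have h2 := Nat.card_congr e2
  simp only [Nat.card_eq_fintype_card, Fintype.card_sigma] at h1 h2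
  simp only [Nat.card_eq_fintype_card]
  rw [← h1, h2]

/-- Let `D = (P, B, I)` be a non-trivial `G`-locally primitive 2-design and
let `N ⊴ G` be transitive on `P` but not transitive on `B`. Then every `N`-orbit on `B` has
cardinality `b/r = v/k`; equivalently, for every block `β`, `|β^N| · r = |B|` and
`|β^N| · k = |P|`. -/
theorem stmt_14 {P Bl G : Type*} [Fintype P] [Fintype Bl] [Group G]
    [MulAction G P] [MulAction G Bl] [FaithfulSMul G P]
    (I : P → Bl → Prop) (k r lam : ℕ) (hk2 : 2 ≤ k) (hlam1 : 1 ≤ lam)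
    (hk : ∀ β : Bl, Nat.card {α : P | I α β} = k)
    (hr : ∀ α : P, Nat.card {β : Bl | I α β} = r)
    (hlam : ∀ α₁ α₂ : P, α₁ ≠ α₂ → Nat.card {β : Bl | I α₁ β ∧ I α₂ β} = lam)
    (hnontriv : k < Nat.card P)
    (hpres : ∀ (g : G) (α : P) (β : Bl), I α β ↔ I (g • α) (g • β))
    (hlp : LocallyPrimitive G I)
    (N : Subgroup G) (hN : N.Normal)
    (hNPtrans : ∀ α₁ α₂ : P, ∃ n ∈ N, n • α₁ = α₂)
    (hNnotBtrans : ¬ ∀ β₁ β₂ : Bl, ∃ n ∈ N, n • β₁ = β₂) :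
    ∀ β : Bl, Nat.card {β' : Bl | ∃ n ∈ N, β' = n • β} * r = Nat.card Bl ∧
      Nat.card {β' : Bl | ∃ n ∈ N, β' = n • β} * k = Nat.card P := by
  classical
  have hk0 : 0 < k := by omega
  have hr' : ∀ α : P, Nat.card {β' : Bl // I α β'} = r := hr
  have hk' : ∀ β' : Bl, Nat.card {α : P // I α β'} = k := hk
  -- the standard count v * r = b * k
  have hvr : Nat.card P * r = Nat.card Bl * k := by
    have h := double_count I
    have h1 : ∑ α : P, Nat.card {b : Bl // I α b} = Fintype.card P * r := by
      rw [Finset.sum_congr rfl (fun α _ => hr' α), Finset.sum_const, Finset.card_univ,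
        smul_eq_mul]
    have h2 : ∑ b : Bl, Nat.card {α : P // I α b} = Fintype.card Bl * k := by
      rw [Finset.sum_congr rfl (fun b _ => hk' b), Finset.sum_const, Finset.card_univ,
        smul_eq_mul]
    rw [Nat.card_eq_fintype_card, Nat.card_eq_fintype_card, ← h1, ← h2, h]
  intro β
  -- the N-orbit of β
  have hOrb : {β' : Bl | ∃ n ∈ N, β' = n • β} = orbAux N β := rfl
  rw [hOrb]
  -- stabilizers preserve pencils D(α)
  have hDα : ∀ (g : G) (α : P), g ∈ MulAction.stabilizer G α →
      g • {β' : Bl | I α β'} = {β' : Bl | I α β'} := by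
    intro g α hg
    have hg' : g • α = α := hg
    ext z
    rw [Set.mem_smul_set_iff_inv_smul_mem]
    simp only [Set.mem_setOf_eq]
    constructor
    · intro h
      have := (hpres g α (g⁻¹ • z)).mp h
      rwa [smul_inv_smul, hg'] at this
    · intro h
      have := (hpres g⁻¹ α z).mp h
      rwa [inv_smul_eq_iff.mpr hg'.symm] at this
  -- each N-orbit meets each pencil in at most one block
  have hsub : ∀ α : P, ({β' : Bl | I α β'} ∩ orbAux N β).Subsingleton := by
    intro α
    obtain ⟨-, -, hblock⟩ := hlp.1 α
    have hcond : ∀ h ∈ MulAction.stabilizer G α,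
        h • ({β' : Bl | I α β'} ∩ orbAux N β) = ({β' : Bl | I α β'} ∩ orbAux N β) ∨
        Disjoint (h • ({β' : Bl | I α β'} ∩ orbAux N β))
          ({β' : Bl | I α β'} ∩ orbAux N β) := by
      intro h hh
      rw [Set.smul_set_inter, hDα h α hh, smul_orbAux hN h β]
      rcases orbAux_eq_or_disjoint N (h • β) β with he | hd
      · left; rw [he]
      · right
        exact hd.mono Set.inter_subset_right Set.inter_subset_right
    rcases hblock _ Set.inter_subset_left hcond with h | h
    · exact h
    · -- all blocks through α lie in the orbit; then N is block-transitive, contradiction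
      exfalso
      apply hNnotBtrans
      have hallO : ∀ β'' : Bl, β'' ∈ orbAux N β := by
        intro β''
        have hpos : 0 < Nat.card {α' : P | I α' β''} := by rw [hk]; omega
        obtain ⟨⟨α', hα'⟩⟩ := (Nat.card_pos_iff.mp hpos).1
        obtain ⟨n, hn, hnα⟩ := hNPtrans α' α
        have hin : I α (n • β'') := by
          rw [← hnα]; exact (hpres n α' β'').mp hα'
        have hmem : n • β'' ∈ {β' : Bl | I α β'} ∩ orbAux N β := by
          rw [h]; exact hin
        obtain ⟨m, hm, heq⟩ := hmem.2
        refine ⟨n⁻¹ * m, mul_mem (inv_mem hn) hm, ?_⟩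
        rw [mul_smul, ← heq, inv_smul_smul]
      intro β₁ β₂
      obtain ⟨n₁, h₁, e₁⟩ := hallO β₁
      obtain ⟨n₂, h₂, e₂⟩ := hallO β₂
      refine ⟨n₂ * n₁⁻¹, mul_mem h₂ (inv_mem h₁), ?_⟩
      rw [e₁, e₂, mul_smul, inv_smul_smul]
  -- each pencil meets the orbit in exactly one block
  have hone : ∀ α : P, Nat.card {β' : Bl // I α β' ∧ β' ∈ orbAux N β} = 1 := by
    intro α
    have hpos : 0 < Nat.card {α' : P | I α' β} := by rw [hk]; omega
    obtain ⟨⟨α₀, hα₀⟩⟩ := (Nat.card_pos_iff.mp hpos).1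
    obtain ⟨n, hn, hnα⟩ := hNPtrans α₀ α
    have hmem : I α (n • β) ∧ (n • β) ∈ orbAux N β := by
      constructor
      · rw [← hnα]; exact (hpres n α₀ β).mp hα₀
      · exact ⟨n, hn, rfl⟩
    rw [Nat.card_eq_one_iff_unique]
    constructor
    · constructor
      rintro ⟨x, hx⟩ ⟨y, hy⟩
      have := hsub α ⟨hx.1, hx.2⟩ ⟨hy.1, hy.2⟩
      exact Subtype.ext this
    · exact ⟨⟨n • β, hmem⟩⟩
  -- double count flags lying in the orbit
  have hcnt := double_count (fun (α : P) (β' : Bl) => I α β' ∧ β' ∈ orbAux N β)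
  have hL : ∑ α : P, Nat.card {β' : Bl // I α β' ∧ β' ∈ orbAux N β} = Fintype.card P := by
    rw [Finset.sum_congr rfl (fun α _ => hone α), Finset.sum_const, Finset.card_univ,
      smul_eq_mul, mul_one]
  have hfib : ∀ β' : Bl, Nat.card {α : P // I α β' ∧ β' ∈ orbAux N β} =
      if β' ∈ orbAux N β then k else 0 := by
    intro β'
    by_cases hβ' : β' ∈ orbAux N β
    · rw [if_pos hβ']
      rw [Nat.card_congr (Equiv.subtypeEquivRight (fun α => and_iff_left hβ'))]
      exact hk β'
    · rw [if_neg hβ']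
      have : IsEmpty {α : P // I α β' ∧ β' ∈ orbAux N β} := ⟨fun x => hβ' x.2.2⟩
      exact Nat.card_of_isEmpty
  have hR : ∑ β' : Bl, Nat.card {α : P // I α β' ∧ β' ∈ orbAux N β} =
      Nat.card (orbAux N β) * k := by
    rw [Finset.sum_congr rfl (fun β' _ => hfib β'), ← Finset.sum_filter,
      Finset.sum_const, smul_eq_mul]
    congr 1
    rw [Nat.card_eq_fintype_card, Fintype.card_subtype]
  have hOk : Nat.card (orbAux N β) * k = Nat.card P := by
    rw [Nat.card_eq_fintype_card (α := P), ← hL, hcnt, hR]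
  refine ⟨?_, hOk⟩
  refine Nat.eq_of_mul_eq_mul_right hk0 ?_
  calc Nat.card (orbAux N β) * r * k = Nat.card (orbAux N β) * k * r := by ring
    _ = Nat.card P * r := by rw [hOk]
    _ = Nat.card Bl * k := hvr
end

section
/- Let p be a prime and V = F_p^d a d-dimensional vector space over the field with p elements. Let D = (P, B, I) be a non-trivial 2-design whose point set P is V, and let G ≤ Aut(D) be locally primitive. Suppose the group N of all translations {x ↦ x + w : w ∈ V} is contained in G, is normal in G, and is not transitive on B. Then there is an integer i with 0 < i < d such that for every block β ∈ B, the point set D(β) is a coset W + u of some i-dimensional linear subspace W ≤ V; consequently D is a subdesign of AG_i(d, p) and is non-symmetric, i.e., |B| > |P|. -/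
open Pointwise

/-! Every block `β` is a coset of its translation stabilizer `T_β = {w | β + w = β}`. Because the
translations form a normal subgroup, the stabilizer `G_β` permutes the `T_β`-cosets inside `D(β)`,
so by primitivity the coset through a point of `β` fills `D(β)` unless `T_β = 0`. If `T_β = 0`, the
`N`-orbit of `β` meets `D(α)`, for `α ∈ D(β)`, in a block of imprimitivity of `G_α` containing two
distinct blocks, hence in all of `D(α)`; since every block is a translate of one through `α`, `N`
would be transitive on blocks. Thus `k = |T_β| = p ^ i` with `0 < i < d`.

For non-symmetry only `k ∣ v` matters: writing `v = c k`, the replication identity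
`r (k - 1) = (v - 1) λ` gives `v - 1 ∣ r (k - 1)`, hence `v - 1 ∣ r (c - 1)`, so `r > k`, and
`v r = b k` gives `b > v`. -/

lemma lt_of_mul_sub_one_dvd_mul_sub_one {a c r : ℕ} (ha : 2 ≤ a) (hc : 2 ≤ c) (hr : 0 < r)
    (h : c * a - 1 ∣ r * (a - 1)) : a < r := by
  have hca : 1 ≤ c * a := Nat.one_le_iff_ne_zero.mpr (by positivity)
  have hdvd : c * a - 1 ∣ r * (c - 1) := by
    have hsum : r * (c - 1) + c * (r * (a - 1)) = r * (c * a - 1) := by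
      zify [hca, (by omega : 1 ≤ c), (by omega : 1 ≤ a)]; ring
    exact (Nat.dvd_add_left (dvd_mul_of_dvd_right h c)).mp (hsum ▸ dvd_mul_left _ _)
  have hle := Nat.le_of_dvd (Nat.mul_pos hr (by omega)) hdvd
  by_contra! hra
  have := Nat.mul_le_mul_right (c - 1) hra
  zify [hca, (by omega : 1 ≤ c)] at hle this
  nlinarith

section Design

open Finset

variable {P B : Type*} [Fintype P] [Fintype B] {k lam : ℕ}

lemma natCard_setOf_eq_card_filter {α : Type*} [Fintype α] (q : α → Prop) [DecidablePred q] :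
    Nat.card {x | q x} = #{x | q x} := by
  simp [Nat.card_eq_fintype_card, Fintype.card_subtype]

lemma card_incident_mul_sub_one (I : P → B → Prop) (hk : ∀ β, Nat.card {x | I x β} = k)
    (hlam : ∀ x y, x ≠ y → Nat.card {β | I x β ∧ I y β} = lam) (α : P) :
    Nat.card {β | I α β} * (k - 1) = (Nat.card P - 1) * lam := by
  classical
  simp only [natCard_setOf_eq_card_filter] at hk hlam ⊢
  rw [Nat.card_eq_fintype_card, ← card_univ, ← card_erase_of_mem (mem_univ α)]
  refine card_mul_eq_card_mul (fun β y => I y β) (fun β hβ => ?_) (fun y hy => ?_)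
  · rw [bipartiteAbove, filter_erase, card_erase_of_mem (by simpa using hβ), hk]
  · rw [bipartiteBelow, filter_filter, hlam α y (ne_of_mem_erase hy).symm]

lemma card_mul_eq_card_mul_of_replication (I : P → B → Prop) {r : ℕ}
    (hk : ∀ β, Nat.card {x | I x β} = k)
    (hr : ∀ α, Nat.card {β | I α β} = r) : Nat.card P * r = Nat.card B * k := by
  classical
  simp only [natCard_setOf_eq_card_filter] at hk hr
  simp only [Nat.card_eq_fintype_card, ← card_univ]
  exact card_mul_eq_card_mul I (fun α _ => hr α) (fun β _ => hk β)

omit [Fintype B] in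
lemma nonempty_of_one_lt_card (I : P → B → Prop)
    (hlam : ∀ x y, x ≠ y → Nat.card {β | I x β ∧ I y β} = lam)
    (hlam1 : 1 ≤ lam) (hv : 1 < Nat.card P) : Nonempty B := by
  obtain ⟨x, y, hxy⟩ := (Finite.one_lt_card_iff_nontrivial.mp hv).exists_pair_ne
  exact (Nat.card_pos_iff.mp (hlam x y hxy ▸ hlam1 : 0 < _)).1.map Subtype.val

theorem card_lt_card_of_dvd_card {I : P → B → Prop} (hk : ∀ β, Nat.card {x | I x β} = k)
    (hlam : ∀ x y, x ≠ y → Nat.card {β | I x β ∧ I y β} = lam) (hk2 : 2 ≤ k) (hlam1 : 1 ≤ lam)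
    (hkv : k < Nat.card P) (hdvd : k ∣ Nat.card P) : Nat.card P < Nat.card B := by
  obtain ⟨c, hc⟩ := hdvd
  obtain ⟨α₀⟩ : Nonempty P := Nat.card_pos_iff.mp (by omega) |>.1
  set r := Nat.card {β | I α₀ β}
  have hrα := card_incident_mul_sub_one I hk hlam
  have hr : ∀ α, Nat.card {β | I α β} = r := fun α =>
    Nat.eq_of_mul_eq_mul_right (by omega) ((hrα α).trans (hrα α₀).symm)
  have hrk : r * (k - 1) = (Nat.card P - 1) * lam := hrα α₀
  have hr0 : 0 < r := Nat.pos_of_mul_pos_right (hrk ▸ Nat.mul_pos (by omega) hlam1)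
  have hkr : k < r := lt_of_mul_sub_one_dvd_mul_sub_one hk2 (c := c) (by nlinarith) hr0
    ⟨lam, by rw [hrk, hc, mul_comm k c]⟩
  have hcount := card_mul_eq_card_mul_of_replication I hk hr
  nlinarith

end Design

open MulAction

namespace IsPrimitiveOn

variable {G X : Type*} [Group G] [MulAction G X] {H : Subgroup G} {S : Set X}

lemma isBlock (hS : IsPrimitiveOn H S) : IsBlock H S :=
  IsInvariantBlock.isBlock fun h => Set.smul_set_subset_iff.mpr fun x hx => hS.1 h h.2 x hx

lemma subsingleton_or_eq (hS : IsPrimitiveOn H S) {Δ : Set X} (hΔ : IsBlock H Δ) (hΔS : Δ ⊆ S) :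
    Δ.Subsingleton ∨ Δ = S :=
  hS.2.2 Δ hΔS fun h hh => isBlock_iff_smul_eq_or_disjoint.mp hΔ ⟨h, hh⟩

end IsPrimitiveOn

lemma AddSubgroup.setOf_sub_mem_eq_or_disjoint {V : Type*} [AddCommGroup V] (W : AddSubgroup V)
    (a b : V) : {x | x - a ∈ W} = {x | x - b ∈ W} ∨ Disjoint {x | x - a ∈ W} {x | x - b ∈ W} := by
  simp only [← QuotientAddGroup.eq_iff_sub_mem]
  by_cases h : (a : V ⧸ W) = b
  · exact Or.inl (by simp only [h])
  · exact Or.inr (Set.disjoint_left.mpr fun x hxa hxb => h (hxa.symm.trans hxb))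

lemma AddSubgroup.natCard_setOf_sub_mem {V : Type*} [AddCommGroup V] (W : AddSubgroup V) (u : V) :
    Nat.card {x | x - u ∈ W} = Nat.card W :=
  Nat.card_congr ((Equiv.subRight u).subtypeEquiv fun _ => Iff.rfl)

lemma AddSubgroup.natCard_eq_pow_finrank {p : ℕ} [Fact p.Prime] {V : Type*} [AddCommGroup V]
    [Module (ZMod p) V] [Finite V] (W : AddSubgroup V) :
    Nat.card W = p ^ Module.finrank (ZMod p) (W.toZModSubmodule p) := by
  simpa using Module.natCard_eq_pow_finrank (K := ZMod p) (V := W.toZModSubmodule p)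

namespace Translation

variable {V G X : Type*} [AddCommGroup V] [Group G] [MulAction G V] {τ : V → G}

lemma incident_translate [MulAction G X] {I : V → X → Prop}
    (hτ : ∀ w x, τ w • x = x + w) (hpres : ∀ (g : G) x β, I x β ↔ I (g • x) (g • β))
    {x : V} {β : X} (h : I x β) (y : V) : I y (τ (y - x) • β) := by
  simpa [hτ] using (hpres (τ (y - x)) x β).mp h

variable [FaithfulSMul G V]

lemma eq_of_forall_smul_eq_add (hτ : ∀ w x, τ w • x = x + w) {g : G} {w : V}
    (hg : ∀ x, g • x = x + w) : g = τ w :=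
  eq_of_smul_eq_smul fun x => by rw [hg, hτ]

lemma map_add (hτ : ∀ w x, τ w • x = x + w) (w w' : V) : τ (w + w') = τ w * τ w' :=
  (eq_of_forall_smul_eq_add hτ fun x => by rw [mul_smul, hτ, hτ, add_assoc, add_comm w']).symm

lemma map_zero (hτ : ∀ w x, τ w • x = x + w) : τ 0 = 1 :=
  (eq_of_forall_smul_eq_add hτ fun x => by rw [one_smul, add_zero]).symm

lemma map_neg (hτ : ∀ w x, τ w • x = x + w) (w : V) : τ (-w) = (τ w)⁻¹ :=
  eq_inv_of_mul_eq_one_right (by rw [← map_add hτ, add_neg_cancel, map_zero hτ])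

variable [MulAction G X] (hτ : ∀ w x, τ w • x = x + w)

def stabilizer (β : X) : AddSubgroup V where
  carrier := {w | τ w • β = β}
  add_mem' {w w'} (hw : τ w • β = β) (hw' : τ w' • β = β) := show τ (w + w') • β = β by
    rw [map_add hτ, mul_smul, hw', hw]
  zero_mem' := show τ 0 • β = β by rw [map_zero hτ, one_smul]
  neg_mem' {w} (hw : τ w • β = β) := show τ (-w) • β = β by
    rw [map_neg hτ, inv_smul_eq_iff, hw]

lemma mem_stabilizer {β : X} {w : V} : w ∈ stabilizer hτ β ↔ τ w • β = β := Iff.rfl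

variable {hτ}

lemma isPretransitive_of_stabilizer_eq_bot {N : Subgroup G} [N.Normal] (hτN : ∀ w, τ w ∈ N)
    {I : V → X → Prop} (hpres : ∀ (g : G) x β, I x β ↔ I (g • x) (g • β))
    (hprim : ∀ α, IsPrimitiveOn (MulAction.stabilizer G α) {β | I α β}) (hne : ∀ β, ∃ x, I x β)
    {β₀ : X} (h2 : {x | I x β₀}.Nontrivial) (hT : stabilizer hτ β₀ = ⊥) : IsPretransitive N X := by
  obtain ⟨α₀, hα₀, α₁, hα₁, hne01⟩ := h2
  have hΔ : IsBlock (MulAction.stabilizer G α₀) ({β | I α₀ β} ∩ orbit N β₀) :=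
    (hprim α₀).isBlock.inter (IsBlock.orbit_of_normal β₀).subgroup
  rcases (hprim α₀).subsingleton_or_eq hΔ Set.inter_subset_left with hss | heq
  · have hfix : α₀ - α₁ ∈ stabilizer hτ β₀ :=
      hss ⟨incident_translate hτ hpres hα₁ α₀, ⟨τ _, hτN _⟩, rfl⟩ ⟨hα₀, mem_orbit_self β₀⟩
    rw [hT, AddSubgroup.mem_bot, sub_eq_zero] at hfix
    exact absurd hfix hne01
  · refine (isPretransitive_iff_orbit_eq_univ β₀).mpr (Set.eq_univ_of_forall fun β => ?_)
    obtain ⟨x, hx⟩ := hne β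
    let n : N := ⟨τ (α₀ - x), hτN _⟩
    have hmem : n • β ∈ {β | I α₀ β} ∩ orbit N β₀ := by
      rw [heq]; exact incident_translate hτ hpres hx α₀
    simpa using mem_orbit_of_mem_orbit n⁻¹ hmem.2

variable (hconj : ∀ (g : G) (w : V), ∃ w', g * τ w * g⁻¹ = τ w')
include hconj

lemma smul_sub_smul_mem_stabilizer {x y : V} {β : X} (h : y - x ∈ stabilizer hτ β) (g : G) :
    g • y - g • x ∈ stabilizer hτ (g • β) := by
  obtain ⟨w, hw⟩ := hconj g (y - x)
  have hgy : g • y = g • x + w := by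
    calc g • y = (g * τ (y - x) * g⁻¹) • g • x := by
          rw [mul_smul, mul_smul, inv_smul_smul, hτ, add_sub_cancel]
      _ = g • x + w := by rw [hw, hτ]
  rw [hgy, add_sub_cancel_left, mem_stabilizer, ← hw, mul_smul, mul_smul, inv_smul_smul, h]

lemma smul_setOf_sub_mem_stabilizer {β : X} {g : G} (hg : g • β = β) (a : V) :
    g • {x | x - a ∈ stabilizer hτ β} = {x | x - g • a ∈ stabilizer hτ β} := by
  ext y
  rw [Set.mem_smul_set_iff_inv_smul_mem]
  constructor
  · intro hy
    simpa [hg] using smul_sub_smul_mem_stabilizer hconj hy g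
  · intro hy
    have := smul_sub_smul_mem_stabilizer (hτ := hτ) hconj hy g⁻¹
    rwa [inv_smul_smul, inv_smul_eq_iff.mpr hg.symm] at this

lemma isBlock_setOf_sub_mem_stabilizer (β : X) (a : V) :
    IsBlock (MulAction.stabilizer G β) {x | x - a ∈ stabilizer hτ β} := by
  refine isBlock_iff_smul_eq_or_disjoint.mpr fun g => ?_
  change (g : G) • {x | x - a ∈ stabilizer hτ β} = _ ∨
    Disjoint ((g : G) • {x | x - a ∈ stabilizer hτ β}) _
  rw [smul_setOf_sub_mem_stabilizer hconj g.2]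
  exact AddSubgroup.setOf_sub_mem_eq_or_disjoint _ _ _

lemma setOf_incident_eq_of_stabilizer_ne_bot {I : V → X → Prop}
    (hpres : ∀ (g : G) x β, I x β ↔ I (g • x) (g • β)) {β : X}
    (hprim : IsPrimitiveOn (MulAction.stabilizer G β) {x | I x β}) {α : V} (hα : I α β)
    (hT : stabilizer hτ β ≠ ⊥) : {x | I x β} = {x | x - α ∈ stabilizer hτ β} := by
  have hsub : {x | x - α ∈ stabilizer hτ β} ⊆ {x | I x β} := fun x (hx : τ (x - α) • β = β) => by
    simpa [hx] using incident_translate hτ hpres hα x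
  refine ((hprim.subsingleton_or_eq (isBlock_setOf_sub_mem_stabilizer hconj β α) hsub).resolve_left
    fun hss => hT ?_).symm
  refine (AddSubgroup.eq_bot_iff_forall _).mpr fun w hw => ?_
  simpa using hss (show α + w ∈ {x | x - α ∈ stabilizer hτ β} by simpa)
    (show α ∈ {x | x - α ∈ stabilizer hτ β} by simp)

end Translation

/-- Let `p` be a prime, `V = F_p^d`, and let `D = (P, B, I)` be a non-trivial
2-design with point set `V`, `G ≤ Aut(D)` locally primitive. Suppose the group `N` of all
translations of `V` is contained in `G`, is normal in `G`, and is not transitive on `B`.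
Then there is `0 < i < d` such that every block's point set is a coset `W + u` of an
`i`-dimensional subspace `W ≤ V`; consequently `D` is a subdesign of `AG_i(d, p)` and is
non-symmetric, i.e. `|P| < |B|`. -/
theorem stmt_15 {p : ℕ} [Fact p.Prime] {V : Type*} [AddCommGroup V] [Module (ZMod p) V]
    [Fintype V] {Bl G : Type*} [Fintype Bl] [Group G]
    [MulAction G V] [MulAction G Bl] [FaithfulSMul G V]
    (d : ℕ) (hd : Module.finrank (ZMod p) V = d)
    (I : V → Bl → Prop) (k lam : ℕ) (hk2 : 2 ≤ k) (hlam1 : 1 ≤ lam)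
    (hk : ∀ β : Bl, Nat.card {x : V | I x β} = k)
    (hlam : ∀ x y : V, x ≠ y → Nat.card {β : Bl | I x β ∧ I y β} = lam)
    (hnontriv : k < Nat.card V)
    (hpres : ∀ (g : G) (x : V) (β : Bl), I x β ↔ I (g • x) (g • β))
    (hlp : LocallyPrimitive G I)
    (N : Subgroup G) (hN : N.Normal)
    (hNtransl : ∀ n ∈ N, ∃ w : V, ∀ x : V, n • x = x + w)
    (hNall : ∀ w : V, ∃ n ∈ N, ∀ x : V, n • x = x + w)
    (hNnotBtrans : ¬ ∀ β₁ β₂ : Bl, ∃ n ∈ N, n • β₁ = β₂) :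
    ∃ i : ℕ, 0 < i ∧ i < d ∧
      (∀ β : Bl, ∃ (W : Submodule (ZMod p) V) (u : V),
        Module.finrank (ZMod p) W = i ∧ {x : V | I x β} = {x : V | x - u ∈ W}) ∧
      Nat.card V < Nat.card Bl := by
  classical
  have hp : p.Prime := Fact.out
  choose τ hτN hτ using hNall
  have hconj : ∀ (g : G) (w : V), ∃ w', g * τ w * g⁻¹ = τ w' := fun g w =>
    (hNtransl _ (hN.conj_mem _ (hτN w) g)).imp fun _ => Translation.eq_of_forall_smul_eq_add hτ
  set T := Translation.stabilizer (X := Bl) hτ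
  have hpts : ∀ β, {x | I x β}.Nontrivial := fun β => by
    rw [← Set.one_lt_ncard_iff_nontrivial, ← Nat.card_coe_set_eq, hk β]; omega
  have hcoset : ∀ β, ∃ u, {x | I x β} = {x | x - u ∈ T β} := fun β => by
    obtain ⟨u, hu⟩ := (hpts β).nonempty
    refine ⟨u, Translation.setOf_incident_eq_of_stabilizer_ne_bot hconj hpres (hlp.2 β) hu
      fun hT => hNnotBtrans fun β₁ β₂ => ?_⟩
    have := Translation.isPretransitive_of_stabilizer_eq_bot hτN hpres hlp.1
      (fun β => (hpts β).nonempty) (hpts β) hT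
    obtain ⟨n, hn⟩ := exists_smul_eq N β₁ β₂
    exact ⟨n, n.2, hn⟩
  choose u hu using hcoset
  have hcard : ∀ β, p ^ Module.finrank (ZMod p) ((T β).toZModSubmodule p) = k := fun β => by
    rw [← hk β, hu β, AddSubgroup.natCard_setOf_sub_mem, AddSubgroup.natCard_eq_pow_finrank (p := p)]
  have hv : Nat.card V = p ^ d := by
    rw [Module.natCard_eq_pow_finrank (K := ZMod p), Nat.card_zmod, hd]
  obtain ⟨β₀⟩ := nonempty_of_one_lt_card I hlam hlam1 (by omega)
  set i := Module.finrank (ZMod p) ((T β₀).toZModSubmodule p)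
  have hki : p ^ i = k := hcard β₀
  have hid : i < d := (Nat.pow_lt_pow_iff_right hp.one_lt).mp (by rw [hki, ← hv]; exact hnontriv)
  refine ⟨i, Nat.pos_of_ne_zero fun h => ?_, hid,
    fun β => ⟨_, u β, Nat.pow_right_injective hp.two_le ((hcard β).trans hki.symm), hu β⟩,
    card_lt_card_of_dvd_card hk hlam hk2 hlam1 hnontriv ?_⟩
  · rw [h, pow_zero] at hki; omega
  · rw [← hki, hv]; exact pow_dvd_pow p hid.le
end

section
/- Let D = (P, B, I) be a non-trivial 2-design, let G ≤ Aut(D) be locally primitive, and let N be a normal subgroup of G that is transitive on P and transitive on B and whose stabilizer N_α of some point α is non-trivial. Then N is transitive on the set of flags of D. -/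
open Pointwise

/-- Dichotomy: the orbits of `N_x` on `{y | J x y}` form a block system for the primitive
action of `G_x`, hence `N_x` is transitive on `{y | J x y}` or fixes it pointwise. -/
lemma dichotomy {G X Y : Type*} [Group G] [MulAction G X] [MulAction G Y]
    (J : X → Y → Prop) (hpres : ∀ (g : G) (x : X) (y : Y), J x y ↔ J (g • x) (g • y))
    (N : Subgroup G) (hN : N.Normal) (x : X)
    (hprim : IsPrimitiveOn (MulAction.stabilizer G x) {y : Y | J x y}) :
    (∀ y₁ y₂ : Y, J x y₁ → J x y₂ → ∃ n ∈ N, n • x = x ∧ n • y₁ = y₂) ∨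
    (∀ n ∈ N, n • x = x → ∀ y : Y, J x y → n • y = y) := by
  by_cases hfix : ∀ n ∈ N, n • x = x → ∀ y : Y, J x y → n • y = y
  · exact Or.inr hfix
  left
  push_neg at hfix
  obtain ⟨n, hnN, hnx, y, hJy, hny⟩ := hfix
  set Δ : Set Y := {b | ∃ m : G, m ∈ N ∧ m • x = x ∧ m • y = b} with hΔdef
  have hΔS : Δ ⊆ {y' : Y | J x y'} := by
    rintro b ⟨m, hmN, hmx, rfl⟩
    have h1 := (hpres m x y).mp hJy
    rwa [hmx] at h1
  have hblock : ∀ h ∈ MulAction.stabilizer G x, h • Δ = Δ ∨ Disjoint (h • Δ) Δ := by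
    intro h hh
    have hhx : h • x = x := hh
    have hhx' : h⁻¹ • x = x := by rw [inv_smul_eq_iff, hhx]
    by_cases hd : Disjoint (h • Δ) Δ
    · exact Or.inr hd
    rw [Set.not_disjoint_iff] at hd
    obtain ⟨b, hb1, hb2⟩ := hd
    rw [Set.mem_smul_set] at hb1
    obtain ⟨c, ⟨m₁, hm₁N, hm₁x, rfl⟩, hc⟩ := hb1
    obtain ⟨m₂, hm₂N, hm₂x, hb⟩ := hb2
    have hyb : m₂ • y = h • (m₁ • y) := by rw [hb, ← hc]
    have hm₁x' : m₁⁻¹ • x = x := by rw [inv_smul_eq_iff, hm₁x]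
    have hm₂x' : m₂⁻¹ • x = x := by rw [inv_smul_eq_iff, hm₂x]
    left
    ext b'
    rw [Set.mem_smul_set]
    constructor
    · rintro ⟨c, ⟨m, hmN, hmx, rfl⟩, rfl⟩
      refine ⟨(h * (m * m₁⁻¹) * h⁻¹) * m₂, ?_, ?_, ?_⟩
      · exact mul_mem (hN.conj_mem _ (mul_mem hmN (inv_mem hm₁N)) h) hm₂N
      · simp only [mul_smul, hm₂x, hhx', hm₁x', hmx, hhx]
      · simp only [mul_smul]
        rw [hyb, inv_smul_smul, inv_smul_smul]
    · rintro ⟨m, hmN, hmx, rfl⟩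
      refine ⟨((h⁻¹ * (m * m₂⁻¹) * h) * m₁) • y, ⟨(h⁻¹ * (m * m₂⁻¹) * h) * m₁, ?_, ?_, rfl⟩, ?_⟩
      · refine mul_mem ?_ hm₁N
        have := hN.conj_mem _ (mul_mem hmN (inv_mem hm₂N)) h⁻¹
        rwa [inv_inv] at this
      · simp only [mul_smul, hm₁x, hhx, hm₂x', hmx, hhx']
      · simp only [mul_smul]
        rw [← hyb, inv_smul_smul, smul_inv_smul]
  have hres := hprim.2.2 Δ hΔS hblock
  have hyΔ : y ∈ Δ := ⟨1, one_mem N, by simp, by simp⟩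
  have hnyΔ : n • y ∈ Δ := ⟨n, hnN, hnx, rfl⟩
  have hns : ¬ Δ.Subsingleton := fun hs => hny (hs hnyΔ hyΔ)
  have hΔ := hres.resolve_left hns
  intro y₁ y₂ hy₁ hy₂
  have h₁ : y₁ ∈ Δ := hΔ ▸ hy₁
  have h₂ : y₂ ∈ Δ := hΔ ▸ hy₂
  obtain ⟨m₁, hm₁N, hm₁x, hm₁y⟩ := h₁
  obtain ⟨m₂, hm₂N, hm₂x, hm₂y⟩ := h₂
  refine ⟨m₂ * m₁⁻¹, mul_mem hm₂N (inv_mem hm₁N), ?_, ?_⟩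
  · have hm₁x' : m₁⁻¹ • x = x := by rw [inv_smul_eq_iff, hm₁x]
    simp only [mul_smul, hm₁x', hm₂x]
  · rw [mul_smul, ← hm₁y, inv_smul_smul, hm₂y]

/-- Transfer the "fixes everything incident" property along `N`-transitivity. -/
lemma fix_transfer {G X Y : Type*} [Group G] [MulAction G X] [MulAction G Y]
    (J : X → Y → Prop) (hpres : ∀ (g : G) (x : X) (y : Y), J x y ↔ J (g • x) (g • y))
    (N : Subgroup G) (x x' : X) (m : G) (hmN : m ∈ N) (hmx : m • x = x')
    (hfix : ∀ n ∈ N, n • x = x → ∀ y : Y, J x y → n • y = y) :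
    ∀ n ∈ N, n • x' = x' → ∀ y : Y, J x' y → n • y = y := by
  intro n hnN hnx' y hJ
  have h1 : (m⁻¹ * n * m) ∈ N := mul_mem (mul_mem (inv_mem hmN) hnN) hmN
  have h2 : (m⁻¹ * n * m) • x = x := by
    simp only [mul_smul, hmx, hnx', inv_smul_eq_iff, hmx]
  have h3 : J x (m⁻¹ • y) := by
    have := (hpres m⁻¹ x' y).mp hJ
    rwa [← hmx, inv_smul_smul] at this
  have h4 := hfix _ h1 h2 _ h3
  simp only [mul_smul, smul_inv_smul] at h4
  exact MulAction.injective (m⁻¹ : G) h4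

/-- Let `D = (P, B, I)` be a non-trivial 2-design, `G ≤ Aut(D)` locally
primitive, and let `N ⊴ G` be transitive on `P` and on `B` with a non-trivial stabilizer
`N_α` of some point `α`. Then `N` is transitive on the flags of `D`. -/
theorem stmt_16 {P Bl G : Type*} [Fintype P] [Fintype Bl] [Group G]
    [MulAction G P] [MulAction G Bl] [FaithfulSMul G P]
    (I : P → Bl → Prop) (k lam : ℕ) (hk2 : 2 ≤ k) (hlam1 : 1 ≤ lam)
    (hk : ∀ β : Bl, Nat.card {α : P | I α β} = k)
    (hlam : ∀ α₁ α₂ : P, α₁ ≠ α₂ → Nat.card {β : Bl | I α₁ β ∧ I α₂ β} = lam)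
    (hnontriv : k < Nat.card P)
    (hpres : ∀ (g : G) (α : P) (β : Bl), I α β ↔ I (g • α) (g • β))
    (hlp : LocallyPrimitive G I)
    (N : Subgroup G) (hN : N.Normal)
    (hNPtrans : ∀ α₁ α₂ : P, ∃ n ∈ N, n • α₁ = α₂)
    (hNBtrans : ∀ β₁ β₂ : Bl, ∃ n ∈ N, n • β₁ = β₂)
    (α₀ : P) (hα₀ : ∃ n ∈ N, n ≠ 1 ∧ n • α₀ = α₀) :
    ∀ (α : P) (β : Bl), I α β → ∀ (α' : P) (β' : Bl), I α' β' →
      ∃ n ∈ N, n • α = α' ∧ n • β = β' := by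
  intro α β hαβ α' β' hα'β'
  have dichP := fun x : P => dichotomy I hpres N hN x (hlp.1 x)
  have hpres' : ∀ (g : G) (b : Bl) (p : P), I p b ↔ I (g • p) (g • b) :=
    fun g b p => hpres g p b
  have dichB := fun b : Bl => dichotomy (fun (b : Bl) (p : P) => I p b) hpres' N hN b (hlp.2 b)
  rcases dichP α' with htrans | hfixα'
  · obtain ⟨n, hnN, hnα⟩ := hNPtrans α α'
    have hI : I α' (n • β) := by rw [← hnα]; exact (hpres n α β).mp hαβ
    obtain ⟨m, hmN, hmα', hmβ⟩ := htrans (n • β) β' hI hα'β'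
    exact ⟨m * n, mul_mem hmN hnN, by rw [mul_smul, hnα, hmα'], by rw [mul_smul, hmβ]⟩
  rcases dichB β' with htransB | hfixβ'
  · obtain ⟨n, hnN, hnβ⟩ := hNBtrans β β'
    have hI : I (n • α) β' := by rw [← hnβ]; exact (hpres n α β).mp hαβ
    obtain ⟨m, hmN, hmβ', hmα⟩ := htransB (n • α) α' hI hα'β'
    exact ⟨m * n, mul_mem hmN hnN, by rw [mul_smul, hmα], by rw [mul_smul, hnβ, hmβ']⟩
  · exfalso
    obtain ⟨m₀, hm₀N, hm₀⟩ := hNPtrans α' α₀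
    have hfixα₀ := fix_transfer I hpres N α' α₀ m₀ hm₀N hm₀ hfixα'
    have hfixB : ∀ b : Bl, ∀ n ∈ N, n • b = b → ∀ p : P, I p b → n • p = p := by
      intro b
      obtain ⟨m, hmN, hmb⟩ := hNBtrans β' b
      exact fix_transfer (fun (b : Bl) (p : P) => I p b) hpres' N β' b m hmN hmb hfixβ'
    obtain ⟨n, hnN, hn1, hnα₀⟩ := hα₀
    have hall : ∀ p : P, n • p = p := by
      intro p
      by_cases hp : p = α₀
      · rw [hp]; exact hnα₀
      · have hcard := hlam α₀ p (fun h => hp h.symm)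
        have hpos : 0 < Nat.card {β : Bl | I α₀ β ∧ I p β} := by omega
        obtain ⟨⟨b, hb1, hb2⟩⟩ := (Nat.card_pos_iff.mp hpos).1
        have hfb : n • b = b := hfixα₀ n hnN hnα₀ b hb1
        exact hfixB b n hnN hfb p hb2
    exact hn1 (eq_of_smul_eq_smul (fun p : P => by rw [hall p, one_smul]))
end

section
/- Let F be a finite field with |F| > 2 and V a finite-dimensional vector space over F. There is no incidence structure D = (P, B, I) with point set P = V, with every block's point set a coset of a linear subspace of V, with constant block size k satisfying 2 ≤ k < |V|, in which every 2-element subset of V is contained in exactly λ₂ blocks and every 3-element subset of V is contained in exactly λ₃ blocks with λ₂ ≥ 1 and λ₃ ≥ 1. (I.e., a non-trivial subdesign of AG_i(d, q) with q > 2 is never a 3-design.) -/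
/-- Let `F` be a finite field with `|F| > 2` and `V` a finite-dimensional
vector space over `F`. There is no incidence structure with point set `V`, all of whose blocks
have point sets that are cosets of linear subspaces, with constant block size `k` satisfying
`2 ≤ k < |V|`, which is simultaneously a 2-design (with `λ₂ ≥ 1`) and a 3-design (with
`λ₃ ≥ 1`). That is, a non-trivial subdesign of `AG_i(d, q)` with `q > 2` is never a
3-design. -/
theorem stmt_17 {F V Bl : Type*} [Field F] [Fintype F] (hF : 2 < Fintype.card F)
    [AddCommGroup V] [Module F V] [FiniteDimensional F V] [Finite V] [Finite Bl]
    (I : V → Bl → Prop) (k lam₂ lam₃ : ℕ) (hk2 : 2 ≤ k) (hkv : k < Nat.card V)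
    (hl2 : 1 ≤ lam₂) (hl3 : 1 ≤ lam₃)
    (hcoset : ∀ β : Bl, ∃ (W : Submodule F V) (u : V),
      {x : V | I x β} = {x : V | x - u ∈ W})
    (hk : ∀ β : Bl, Nat.card {x : V | I x β} = k)
    (h2 : ∀ x y : V, x ≠ y → Nat.card {β : Bl | I x β ∧ I y β} = lam₂)
    (h3 : ∀ x y z : V, x ≠ y → x ≠ z → y ≠ z →
      Nat.card {β : Bl | I x β ∧ I y β ∧ I z β} = lam₃) :
    False := by
  classical
  -- V is nontrivial
  have hv3 : 3 ≤ Nat.card V := by omega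
  have hVnt : Nontrivial V := by
    rw [← Finite.one_lt_card_iff_nontrivial]
    omega
  obtain ⟨x, y, hxy⟩ := exists_pair_ne V
  -- get c ∈ F, c ≠ 0, c ≠ 1
  have hc : ∃ c : F, c ≠ 0 ∧ c ≠ 1 := by
    by_contra h
    push_neg at h
    have hsub : (Finset.univ : Finset F) ⊆ {0, 1} := by
      intro c _
      rcases eq_or_ne c 0 with h0 | h0
      · simp [h0]
      · simp [h c h0]
    have := Finset.card_le_card hsub
    have h2' : ({0, 1} : Finset F).card ≤ 2 := Finset.card_insert_le _ _ |>.trans (by simp)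
    rw [Finset.card_univ] at this
    omega
  obtain ⟨c, hc0, hc1⟩ := hc
  set z := x + c • (y - x) with hz
  have hyx : y - x ≠ 0 := sub_ne_zero.mpr hxy.symm
  have hzx : x ≠ z := by
    intro h
    apply smul_ne_zero hc0 hyx
    have : c • (y - x) = z - x := by rw [hz]; abel
    rw [this, ← h, sub_self]
  have hzy : y ≠ z := by
    intro h
    apply smul_ne_zero (sub_ne_zero.mpr hc1) hyx
    have : (c - 1) • (y - x) = z - y := by
      rw [hz, sub_smul, one_smul]; abel
    rw [this, ← h, sub_self]
  -- any block through x and y contains z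
  have hline : ∀ β : Bl, I x β → I y β → I z β := by
    intro β hx hy
    obtain ⟨W, u, hW⟩ := hcoset β
    have hx' : x - u ∈ W := by
      have := Set.ext_iff.mp hW x; simpa using this.mp hx
    have hy' : y - u ∈ W := by
      have := Set.ext_iff.mp hW y; simpa using this.mp hy
    have hz' : z - u ∈ W := by
      have hxy' : y - x ∈ W := by
        have := W.sub_mem hy' hx'
        simpa [sub_sub_sub_cancel_right] using this
      have : z - u = (x - u) + c • (y - x) := by rw [hz]; abel
      rw [this]
      exact W.add_mem hx' (W.smul_mem c hxy')
    have := Set.ext_iff.mp hW z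
    exact this.mpr hz'
  -- hence λ₂ = λ₃
  have hset : {β : Bl | I x β ∧ I y β ∧ I z β} = {β : Bl | I x β ∧ I y β} := by
    ext β
    exact ⟨fun ⟨h1, h2, _⟩ => ⟨h1, h2⟩, fun ⟨h1, h2⟩ => ⟨h1, h2, hline β h1 h2⟩⟩
  have hll : lam₃ = lam₂ := by
    rw [← h3 x y z hxy hzx hzy, hset, h2 x y hxy]
  -- every block through x, y contains every point w
  have hall : ∀ w : V, w ≠ x → w ≠ y → ∀ β : Bl, I x β → I y β → I w β := by
    intro w hwx hwy β hx hy
    have hsub : {β : Bl | I x β ∧ I y β ∧ I w β} ⊆ {β : Bl | I x β ∧ I y β} :=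
      fun β ⟨h1, h2, _⟩ => ⟨h1, h2⟩
    have hc3 : Nat.card {β : Bl | I x β ∧ I y β ∧ I w β} = lam₃ :=
      h3 x y w hxy (Ne.symm hwx) (Ne.symm hwy)
    have hc2 : Nat.card {β : Bl | I x β ∧ I y β} = lam₂ := h2 x y hxy
    have heq : {β : Bl | I x β ∧ I y β ∧ I w β} = {β : Bl | I x β ∧ I y β} := by
      apply Set.eq_of_subset_of_ncard_le hsub
      rw [Nat.card_coe_set_eq] at hc3 hc2
      omega
    have : β ∈ {β : Bl | I x β ∧ I y β ∧ I w β} := heq ▸ ⟨hx, hy⟩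
    exact this.2.2
  -- there exists a block through x and y
  have hne : {β : Bl | I x β ∧ I y β}.Nonempty := by
    apply Set.nonempty_of_ncard_ne_zero
    rw [← Nat.card_coe_set_eq, h2 x y hxy]
    omega
  obtain ⟨β, hx, hy⟩ := hne
  -- then that block is all of V, contradicting k < |V|
  have huniv : {x : V | I x β} = Set.univ := by
    ext w
    simp only [Set.mem_setOf_eq, Set.mem_univ, iff_true]
    rcases eq_or_ne w x with rfl | hwx
    · exact hx
    rcases eq_or_ne w y with rfl | hwy
    · exact hy
    exact hall w hwx hwy β hx hy
  have := hk β
  rw [huniv, Nat.card_coe_set_eq, Set.ncard_univ] at this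
  omega
end

section
/- Let V be a finite-dimensional vector space over the field F₂ with two elements. There is no incidence structure D = (P, B, I) with point set P = V, with every block's point set a coset of a linear subspace of V, with constant block size k satisfying 2 ≤ k < |V|, in which every 3-element subset of V is contained in exactly λ₃ blocks and every 4-element subset of V is contained in exactly λ₄ blocks with λ₃ ≥ 1 and λ₄ ≥ 1. (I.e., a non-trivial subdesign of AG_i(d, 2) that is a 3-design is never a 4-design.) -/
/-- Let `V` be a finite-dimensional vector space over `F₂ = ZMod 2`. There
is no incidence structure with point set `V`, all of whose blocks have point sets that are
cosets of linear subspaces, with constant block size `k` satisfying `2 ≤ k < |V|`, which is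
simultaneously a 3-design (with `λ₃ ≥ 1`) and a 4-design (with `λ₄ ≥ 1`). That is, a
non-trivial subdesign of `AG_i(d, 2)` that is a 3-design is never a 4-design. -/
theorem stmt_18 {V Bl : Type*} [AddCommGroup V] [Module (ZMod 2) V]
    [FiniteDimensional (ZMod 2) V] [Finite V] [Finite Bl]
    (I : V → Bl → Prop) (k lam₃ lam₄ : ℕ) (hk2 : 2 ≤ k) (hkv : k < Nat.card V)
    (hl3 : 1 ≤ lam₃) (hl4 : 1 ≤ lam₄)
    (hcoset : ∀ β : Bl, ∃ (W : Submodule (ZMod 2) V) (u : V),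
      {x : V | I x β} = {x : V | x - u ∈ W})
    (hk : ∀ β : Bl, Nat.card {x : V | I x β} = k)
    (h3 : ∀ x y z : V, x ≠ y → x ≠ z → y ≠ z →
      Nat.card {β : Bl | I x β ∧ I y β ∧ I z β} = lam₃)
    (h4 : ∀ x y z w : V, x ≠ y → x ≠ z → x ≠ w → y ≠ z → y ≠ w → z ≠ w →
      Nat.card {β : Bl | I x β ∧ I y β ∧ I z β ∧ I w β} = lam₄) :
    False := by
  classical
  -- characteristic 2
  have self : ∀ u : V, u + u = 0 := by
    intro u
    have h := two_smul (ZMod 2) u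
    have h2 : (2 : ZMod 2) = 0 := by decide
    rw [h2, zero_smul] at h
    exact h.symm
  have cancel : ∀ a b : V, a + b = 0 → a = b := by
    intro a b h
    calc a = a + (b + b) := by rw [self, add_zero]
      _ = (a + b) + b := (add_assoc a b b).symm
      _ = b := by rw [h, zero_add]
  -- closure of blocks under triple sums
  have hclose : ∀ (β : Bl) (a b c : V), I a β → I b β → I c β → I (a + b + c) β := by
    intro β a b c ha hb hc
    obtain ⟨W, u, hW⟩ := hcoset β
    have ha' : a - u ∈ W := (Set.ext_iff.mp hW a).mp ha
    have hb' : b - u ∈ W := (Set.ext_iff.mp hW b).mp hb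
    have hc' : c - u ∈ W := (Set.ext_iff.mp hW c).mp hc
    have key : (a + b + c) - u = ((a - u) + (b - u) + (c - u)) + (u + u) := by abel
    rw [self, add_zero] at key
    have : (a + b + c) - u ∈ W := key ▸ W.add_mem (W.add_mem ha' hb') hc'
    exact (Set.ext_iff.mp hW (a + b + c)).mpr this
  -- three distinct points
  have hV3 : 3 ≤ Nat.card V := by omega
  have hnt : Nontrivial V := by
    rw [← Finite.one_lt_card_iff_nontrivial]
    omega
  obtain ⟨y, hy⟩ : ∃ y : V, y ≠ 0 := exists_ne 0
  obtain ⟨z, hz0, hzy⟩ : ∃ z : V, z ≠ 0 ∧ z ≠ y := by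
    by_contra h
    push_neg at h
    have hsub : (Set.univ : Set V) ⊆ {0, y} := by
      intro z _
      rcases eq_or_ne z 0 with h0 | h0
      · simp [h0]
      · simp [h z h0]
    have hle := Set.ncard_le_ncard hsub (Set.toFinite _)
    have h1 : (Set.univ : Set V).ncard = Nat.card V := Set.ncard_univ V
    have h2 : ({0, y} : Set V).ncard ≤ 2 := by
      calc ({0, y} : Set V).ncard ≤ ({y} : Set V).ncard + 1 := Set.ncard_insert_le _ _
        _ ≤ 2 := by simp
    omega
  set x : V := 0 with hxdef
  have hxy : x ≠ y := fun h => hy h.symm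
  have hxz : x ≠ z := fun h => hz0 h.symm
  have hyz : y ≠ z := fun h => hzy h.symm
  set w : V := x + y + z with hwdef
  have hxw : x ≠ w := by
    intro h
    have : y + z = 0 := by
      have := h.symm
      rw [hwdef, add_assoc] at this
      exact add_left_cancel (this.trans (add_zero x).symm)
    exact hyz (cancel y z this)
  have hyw : y ≠ w := by
    intro h
    rw [hwdef] at h
    have h2 : x = x + z := by
      calc x = y + y := (self y).symm
        _ = (x + y + z) + y := by rw [← h]
        _ = (x + z) + (y + y) := by abel
        _ = x + z := by rw [self, add_zero]
    exact hxz (cancel x z h2.symm)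
  have hzw : z ≠ w := by
    intro h
    rw [hwdef] at h
    have h2 : x = x + y := by
      calc x = z + z := (self z).symm
        _ = (x + y + z) + z := by rw [← h]
        _ = (x + y) + (z + z) := by abel
        _ = x + y := by rw [self, add_zero]
    exact hxy (cancel x y h2.symm)
  -- λ₄ = λ₃
  have hll : lam₄ = lam₃ := by
    have h4' := h4 x y z w hxy hxz hxw hyz hyw hzw
    have h3' := h3 x y z hxy hxz hyz
    have hset : {β : Bl | I x β ∧ I y β ∧ I z β ∧ I w β}
        = {β : Bl | I x β ∧ I y β ∧ I z β} := by
      ext β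
      exact ⟨fun h => ⟨h.1, h.2.1, h.2.2.1⟩,
        fun h => ⟨h.1, h.2.1, h.2.2, hclose β x y z h.1 h.2.1 h.2.2⟩⟩
    rw [← h4', ← h3', hset]
  -- pick a block through x, y, z
  have h3' := h3 x y z hxy hxz hyz
  have hne : (∃ β : Bl, I x β ∧ I y β ∧ I z β) := by
    have hpos : 0 < Nat.card {β : Bl | I x β ∧ I y β ∧ I z β} := by omega
    obtain ⟨⟨β, hβ⟩⟩ := (Nat.card_pos_iff.mp hpos).1
    exact ⟨β, hβ⟩
  obtain ⟨β, hbx, hby, hbz⟩ := hne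
  -- every point is on β
  have hall : ∀ v : V, I v β := by
    intro v
    rcases eq_or_ne v x with h | hvx
    · exact h ▸ hbx
    rcases eq_or_ne v y with h | hvy
    · exact h ▸ hby
    rcases eq_or_ne v z with h | hvz
    · exact h ▸ hbz
    rcases eq_or_ne v w with h | hvw
    · exact h ▸ hclose β x y z hbx hby hbz
    · have h4' := h4 x y z v hxy hxz (Ne.symm hvx) hyz (Ne.symm hvy) (Ne.symm hvz)
      have hsub : {γ : Bl | I x γ ∧ I y γ ∧ I z γ ∧ I v γ}
          ⊆ {γ : Bl | I x γ ∧ I y γ ∧ I z γ} := fun γ h => ⟨h.1, h.2.1, h.2.2.1⟩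
      have hcard : ({γ : Bl | I x γ ∧ I y γ ∧ I z γ} : Set Bl).ncard
          ≤ ({γ : Bl | I x γ ∧ I y γ ∧ I z γ ∧ I v γ} : Set Bl).ncard := by
        rw [← Nat.card_coe_set_eq, ← Nat.card_coe_set_eq, h3', h4']
        omega
      have heq := Set.eq_of_subset_of_ncard_le hsub hcard (Set.toFinite _)
      have : β ∈ {γ : Bl | I x γ ∧ I y γ ∧ I z γ ∧ I v γ} := by
        rw [heq]; exact ⟨hbx, hby, hbz⟩
      exact this.2.2.2
  have huniv : {p : V | I p β} = Set.univ := Set.eq_univ_of_forall hall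
  have := hk β
  rw [huniv] at this
  simp only [Nat.card_coe_set_eq, Set.ncard_univ] at this
  omega
end
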